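/- arXiv:1902.07457 — 3 statements merged into one kernel-verified Lean document; each statement's English description precedes it below -/
import Mathlib

section
/- Let a > −1. For every y > 0 and every t > 0, ∫_0^∞ p^{(a)}(y,η,t) η^a dη = 1. -/
/- Formalization of results from "The structure of the singular set in the thin obstacle
problem for degenerate parabolic equations" by Banerjee, Danielli, Garofalo, Petrosyan.

Points of ℝ^{n+1} are written X = (x,y) with x : Fin n → ℝ and y : ℝ; functions of
space-time are `U : (Fin n → ℝ) → ℝ → ℝ → ℝ`, with `U x y t`. -/

noncomputable section

open MeasureTheory Filter Topology

/-- Functions on ℝⁿ × ℝ × ℝ, written `U x y t` for `X = (x,y)` and time `t`. -/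
abbrev Fn (n : ℕ) := (Fin n → ℝ) → ℝ → ℝ → ℝ

/-- Space-time points `(x, y, t)`. -/
abbrev Pt (n : ℕ) := (Fin n → ℝ) × ℝ × ℝ

/-- Partial derivative in the direction of the i-th thin coordinate. -/
def pdx {n : ℕ} (i : Fin n) (U : Fn n) (x : Fin n → ℝ) (y t : ℝ) : ℝ :=
  fderiv ℝ (fun x' => U x' y t) x (Pi.single i 1)

/-- Partial derivative in the extension variable y. -/
def pdy {n : ℕ} (U : Fn n) (x : Fin n → ℝ) (y t : ℝ) : ℝ :=
  deriv (fun y' => U x y' t) y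

/-- Time derivative. -/
def pdt {n : ℕ} (U : Fn n) (x : Fin n → ℝ) (y t : ℝ) : ℝ :=
  deriv (fun t' => U x y t') t

/-- Squared norm |∇U|² of the full spatial gradient. -/
def gradSq {n : ℕ} (U : Fn n) (x : Fin n → ℝ) (y t : ℝ) : ℝ :=
  (∑ i, (pdx i U x y t) ^ 2) + (pdy U x y t) ^ 2

/-- |∇V − ∇W|². -/
def gradDiffSq {n : ℕ} (V W : Fn n) (x : Fin n → ℝ) (y t : ℝ) : ℝ :=
  (∑ i, (pdx i V x y t - pdx i W x y t) ^ 2) + (pdy V x y t - pdy W x y t) ^ 2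

/-- The generator Z f = ⟨X, ∇f⟩ + 2 t ∂ₜ f of the parabolic dilations. -/
def Zop {n : ℕ} (U : Fn n) (x : Fin n → ℝ) (y t : ℝ) : ℝ :=
  (∑ i, x i * pdx i U x y t) + y * pdy U x y t + 2 * t * pdt U x y t

/-- Laplacian in the x variables only. -/
def lapx {n : ℕ} (U : Fn n) (x : Fin n → ℝ) (y t : ℝ) : ℝ :=
  ∑ i, pdx i (fun x' y' t' => pdx i U x' y' t') x y t

/-- Second derivative in y. -/
def pdyy {n : ℕ} (U : Fn n) (x : Fin n → ℝ) (y t : ℝ) : ℝ :=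
  pdy (fun x' y' t' => pdy U x' y' t') x y t

/-- Full spatial Laplacian in the variables X = (x,y). -/
def lapFull {n : ℕ} (U : Fn n) (x : Fin n → ℝ) (y t : ℝ) : ℝ :=
  lapx U x y t + pdyy U x y t

/-- |X|² for X = (x,y). -/
def nsq {n : ℕ} (x : Fin n → ℝ) (y : ℝ) : ℝ := (∑ i, (x i) ^ 2) + y ^ 2

/-- The backward Neumann fundamental solution Ḡ_a(X,t), for t < 0. -/
def Gbar (n : ℕ) (a : ℝ) (x : Fin n → ℝ) (y t : ℝ) : ℝ :=
  (4 * Real.pi) ^ (-(n : ℝ) / 2) / ((2:ℝ) ^ a * Real.Gamma ((a + 1) / 2)) *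
    |t| ^ (-((n : ℝ) + a + 1) / 2) * Real.exp (-(nsq x y) / (4 * |t|))

/-- The half-strip 𝕊_r⁺ = ℝ^{n+1}_+ × (−r², 0]. -/
def Splus (n : ℕ) (r : ℝ) : Set (Pt n) :=
  {p | 0 < p.2.1 ∧ p.2.2 ∈ Set.Ioc (-(r ^ 2)) 0}

/-- The Gaussian weight Ḡ_a(X,t) yᵃ. -/
def wgt (n : ℕ) (a : ℝ) (p : Pt n) : ℝ :=
  Gbar n a p.1 p.2.1 p.2.2 * p.2.1 ^ a

/-- The height function H(U,r). -/
def Hfn (n : ℕ) (a : ℝ) (U : Fn n) (r : ℝ) : ℝ :=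
  (1 / r ^ 2) * ∫ p in Splus n r, (U p.1 p.2.1 p.2.2) ^ 2 * wgt n a p

/-- The energy D(U,r). -/
def Dfn (n : ℕ) (a : ℝ) (U : Fn n) (r : ℝ) : ℝ :=
  (1 / r ^ 2) * ∫ p in Splus n r, |p.2.2| * gradSq U p.1 p.2.1 p.2.2 * wgt n a p

/-- The total energy I(U,r). -/
def Ifn (n : ℕ) (a : ℝ) (U : Fn n) (r : ℝ) : ℝ :=
  (1 / (2 * r ^ 2)) * ∫ p in Splus n r, U p.1 p.2.1 p.2.2 * Zop U p.1 p.2.1 p.2.2 * wgt n a p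

/-- The set of thin points in S₁ where both U and its weighted normal derivative
∂_yᵃ U vanish.  The extended free boundary Γ_*(U) is its boundary in S₁. -/
def ZeroSet (n : ℕ) (a : ℝ) (U : Fn n) : Set ((Fin n → ℝ) × ℝ) :=
  {q | q.2 ∈ Set.Ioc (-1 : ℝ) 0 ∧ U q.1 0 q.2 = 0 ∧
    Tendsto (fun y => y ^ a * pdy U q.1 y q.2) (𝓝[>] (0 : ℝ)) (𝓝 0)}

/-- The Signorini class 𝔖_F(𝕊₁⁺). -/
structure SignoriniMem (n : ℕ) (a : ℝ) (F U : Fn n) : Prop where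
  /-- continuity up to the thin space -/
  cont : ContinuousOn (fun p : Pt n => U p.1 p.2.1 p.2.2)
    {p : Pt n | 0 ≤ p.2.1 ∧ p.2.2 ∈ Set.Ioc (-1 : ℝ) 0}
  /-- bounded support in the space variables -/
  bddSupp : ∃ R > (0:ℝ), ∀ x y t, R ^ 2 ≤ nsq x y → U x y t = 0
  /-- smoothness in {y > 0} -/
  smooth : ∀ x y t, 0 < y → t ∈ Set.Ioc (-1 : ℝ) 0 →
    ContDiffAt ℝ (⊤ : ℕ∞) (fun p : Pt n => U p.1 p.2.1 p.2.2) (x, y, t)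
  /-- the equation yᵃ ∂ₜU = div(yᵃ ∇U) + yᵃ F holds classically in {y > 0} -/
  pde : ∀ x y t, 0 < y → t ∈ Set.Ioc (-1 : ℝ) 0 →
    pdt U x y t = lapFull U x y t + (a / y) * pdy U x y t + F x y t
  /-- ∇ₓU extends parabolically Hölder continuously up to {y = 0} -/
  holderX : ∃ α > (0:ℝ), ∃ C : ℝ, ∀ i : Fin n, ∀ x y t x' y' t',
    0 < y → 0 < y' → t ∈ Set.Ioc (-1 : ℝ) 0 → t' ∈ Set.Ioc (-1 : ℝ) 0 →
    |pdx i U x y t - pdx i U x' y' t'| ≤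
      C * ((∑ j, (x j - x' j) ^ 2) + (y - y') ^ 2 + |t - t'|) ^ (α / 2)
  /-- yᵃ ∂_y U extends parabolically Hölder continuously up to {y = 0} -/
  holderY : ∃ α > (0:ℝ), ∃ C : ℝ, ∀ x y t x' y' t',
    0 < y → 0 < y' → t ∈ Set.Ioc (-1 : ℝ) 0 → t' ∈ Set.Ioc (-1 : ℝ) 0 →
    |y ^ a * pdy U x y t - y' ^ a * pdy U x' y' t'| ≤
      C * ((∑ j, (x j - x' j) ^ 2) + (y - y') ^ 2 + |t - t'|) ^ (α / 2)
  /-- ∂ₜU ∈ L^∞(𝕊₁⁺) -/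
  bddTime : ∃ M : ℝ, ∀ x y t, 0 < y → t ∈ Set.Ioc (-1 : ℝ) 0 → |pdt U x y t| ≤ M
  /-- yᵃ |∇ ∂ₓᵢ U|² integrable on 𝕊₁⁺ -/
  intXX : ∀ i : Fin n, IntegrableOn
    (fun p : Pt n => p.2.1 ^ a * gradSq (fun x y t => pdx i U x y t) p.1 p.2.1 p.2.2)
    (Splus n 1)
  /-- y^{−a} (∂_y(yᵃ ∂_y U))² integrable on 𝕊₁⁺ -/
  intYY : IntegrableOn
    (fun p : Pt n => p.2.1 ^ (-a) *
      (pdy (fun x y t => y ^ a * pdy U x y t) p.1 p.2.1 p.2.2) ^ 2) (Splus n 1)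
  /-- U ≥ 0 on the thin space -/
  nonneg : ∀ x, ∀ t ∈ Set.Ioc (-1 : ℝ) 0, 0 ≤ U x 0 t
  /-- the Signorini complementarity conditions on the thin space -/
  signorini : ∀ x, ∀ t ∈ Set.Ioc (-1 : ℝ) 0, ∃ L ≤ (0:ℝ),
    Tendsto (fun y => y ^ a * pdy U x y t) (𝓝[>] (0 : ℝ)) (𝓝 L) ∧ U x 0 t * L = 0
  /-- (0,0) belongs to the extended free boundary Γ_*(U) -/
  originFB : (0, 0) ∈ closure (ZeroSet n a U) ∧
    (0, 0) ∈ closure ({q : (Fin n → ℝ) × ℝ | q.2 ∈ Set.Ioc (-1 : ℝ) 0} \ ZeroSet n a U)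

/-- The growth bound |F(X,t)| ≤ C_ℓ |(X,t)|^{ℓ−2} on 𝕊₁⁺. -/
def FGrowth (n : ℕ) (F : Fn n) (l Cl : ℝ) : Prop :=
  ∀ x y t, 0 < y → t ∈ Set.Ioc (-1 : ℝ) 0 →
    |F x y t| ≤ Cl * (nsq x y + |t|) ^ ((l - 2) / 2)

/-- The growth bound |∇_X F(X,t)| ≤ C_ℓ |(X,t)|^{ℓ−3} on 𝔹_{1/2}⁺ × (−1/4, 0]. -/
def FGradGrowth (n : ℕ) (F : Fn n) (l Cl : ℝ) : Prop :=
  ∀ x y t, 0 < y → nsq x y < (1/2 : ℝ) ^ 2 → t ∈ Set.Ioc (-(1/4 : ℝ)) 0 →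
    Real.sqrt (gradSq F x y t) ≤ Cl * (nsq x y + |t|) ^ ((l - 3) / 2)

/-- The growth bound |∂ₜF(X,t)| ≤ C_ℓ |(X,t)|^{ℓ−4} on 𝔹_{1/2}⁺ × (−1/4, 0]. -/
def FTimeGrowth (n : ℕ) (F : Fn n) (l Cl : ℝ) : Prop :=
  ∀ x y t, 0 < y → nsq x y < (1/2 : ℝ) ^ 2 → t ∈ Set.Ioc (-(1/4 : ℝ)) 0 →
    |pdt F x y t| ≤ Cl * (nsq x y + |t|) ^ ((l - 4) / 2)

/-- r ↦ log max{H(U,r), r^{2ℓ−2+2σ}}. -/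
def logMaxH (n : ℕ) (a : ℝ) (U : Fn n) (l σ : ℝ) (r : ℝ) : ℝ :=
  Real.log (max (Hfn n a U r) (r ^ (2 * l - 2 + 2 * σ)))

/-- The set of radii in (0,1) where `logMaxH` is differentiable (it is locally
Lipschitz, hence this set has full measure). -/
def diffSet (n : ℕ) (a : ℝ) (U : Fn n) (l σ : ℝ) : Set ℝ :=
  {r | r ∈ Set.Ioo (0 : ℝ) 1 ∧ DifferentiableAt ℝ (logMaxH n a U l σ) r}

/-- The truncated Almgren–Poon frequency Φ_{ℓ,σ}(U,·), with constant C. -/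
def Phi (n : ℕ) (a : ℝ) (U : Fn n) (l σ C : ℝ) (r : ℝ) : ℝ :=
  (1/2) * r * Real.exp (C * r ^ (1 - σ)) * deriv (logMaxH n a U l σ) r
    + 2 * (Real.exp (C * r ^ (1 - σ)) - 1)

/-- The parabolic Almgren rescalings U_r. -/
def rescale (n : ℕ) (a : ℝ) (U : Fn n) (r : ℝ) : Fn n :=
  fun x y t => U (r • x) (r * y) (r ^ 2 * t) / Real.sqrt (Hfn n a U r)

/-- The Weiss functional 𝒲_κ(U,r). -/
def Wfn (n : ℕ) (a : ℝ) (U : Fn n) (κ r : ℝ) : ℝ :=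
  r ^ (-(2 * κ)) * (Dfn n a U r - κ / 2 * Hfn n a U r)

/-- The Monneau functional M_κ(U,p_κ,r). -/
def Mfn (n : ℕ) (a : ℝ) (U pk : Fn n) (κ r : ℝ) : ℝ :=
  r ^ (-(2 * κ + 2)) *
    ∫ p in Splus n r, (U p.1 p.2.1 p.2.2 - pk p.1 p.2.1 p.2.2) ^ 2 * wgt n a p

/-- Polynomial functions of (x,t). -/
def IsPolyFun2 (n : ℕ) (q : (Fin n → ℝ) → ℝ → ℝ) : Prop :=
  ∃ P : MvPolynomial (Fin (n + 1)) ℝ, ∀ x t, q x t = MvPolynomial.eval (Fin.snoc x t) P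

/-- Polynomial functions of (x,y,t). -/
def IsPolyFun3 (n : ℕ) (q : Fn n) : Prop :=
  ∃ P : MvPolynomial (Fin (n + 2)) ℝ, ∀ x y t,
    q x y t = MvPolynomial.eval (Fin.snoc (Fin.snoc x y) t) P

/-- The class 𝒫_κ⁺ of parabolically κ-homogeneous, even in y, a-caloric polynomials
which are nonnegative on the thin space. -/
def Pkappa (n : ℕ) (a κ : ℝ) (p : Fn n) : Prop :=
  IsPolyFun3 n p ∧
  (∀ lam > (0:ℝ), ∀ x y t, p (lam • x) (lam * y) (lam ^ 2 * t) = lam ^ κ * p x y t) ∧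
  (∀ x y t, p x (-y) t = p x y t) ∧
  (∀ x t, 0 ≤ p x 0 t) ∧
  (∀ x y t, y ≠ 0 →
    pdt p x y t - lapx p x y t - pdyy p x y t - (a / y) * pdy p x y t = 0)

/-- The coincidence set Λ(U) ⊆ S₁. -/
def Lam (n : ℕ) (U : Fn n) : Set ((Fin n → ℝ) × ℝ) :=
  {q | q.2 ∈ Set.Ioc (-1 : ℝ) 0 ∧ U q.1 0 q.2 = 0}

/-- The thin parabolic cylinder Q_r = B_r × (−r²,0]. -/
def Qthin (n : ℕ) (r : ℝ) : Set ((Fin n → ℝ) × ℝ) :=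
  {q | (∑ i, (q.1 i) ^ 2) < r ^ 2 ∧ q.2 ∈ Set.Ioc (-(r ^ 2)) 0}

/-- The modified Bessel function of the first kind I_ν(z). -/
def besselI (ν z : ℝ) : ℝ :=
  ∑' k : ℕ, (z / 2) ^ (ν + 2 * (k : ℝ)) /
    (Real.Gamma ((k : ℝ) + 1) * Real.Gamma ((k : ℝ) + ν + 1))

/-- The Bessel heat kernel p^{(a)}(y,η,t). -/
def pker (a y η t : ℝ) : ℝ :=
  (2 * t) ^ (-(a + 1) / 2) * (y * η / (2 * t)) ^ ((1 - a) / 2) *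
    besselI ((a - 1) / 2) (y * η / (2 * t)) * Real.exp (-(y ^ 2 + η ^ 2) / (4 * t))


/-- stochastic completeness of the Bessel heat semigroup. -/
theorem bessel_kernel_mass_one (a : ℝ) (ha : -1 < a)
    (y t : ℝ) (hy : 0 < y) (ht : 0 < t) :
    ∫ η in Set.Ioi (0 : ℝ), pker a y η t * η ^ a = 1 := by
  have ht4 : (0:ℝ) < 4 * t := by linarith
  have h2t : (0:ℝ) < 2 * t := by linarith
  have hb : (0:ℝ) < 1 / (4 * t) := by positivity
  set w : ℝ := y ^ 2 / (4 * t) with hw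
  have hwpos : 0 < w := by positivity
  set c : ℕ → ℝ := fun k =>
    (2 * t) ^ (-(a + 1) / 2) * 2 ^ ((1 - a) / 2) * Real.exp (-w) *
      (y / (4 * t)) ^ (2 * (k : ℝ)) /
      (Real.Gamma ((k : ℝ) + 1) * Real.Gamma ((k : ℝ) + (a + 1) / 2)) with hc
  set F : ℕ → ℝ → ℝ := fun k η =>
    c k * (η ^ (a + 2 * (k : ℝ)) * Real.exp (-(1 / (4 * t)) * η ^ 2)) with hF
  have hG2pos : ∀ k : ℕ, 0 < Real.Gamma ((k : ℝ) + (a + 1) / 2) := fun k =>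
    Real.Gamma_pos_of_pos (by have : (0:ℝ) ≤ (k:ℝ) := Nat.cast_nonneg k; linarith)
  have hG1pos : ∀ k : ℕ, 0 < Real.Gamma ((k : ℝ) + 1) := fun k =>
    Real.Gamma_pos_of_pos (by positivity)
  have hGfact : ∀ k : ℕ, Real.Gamma ((k : ℝ) + 1) = (k.factorial : ℝ) := fun k =>
    Real.Gamma_nat_eq_factorial k
  have hck : ∀ k, 0 < c k := fun k =>
    div_pos (by positivity) (mul_pos (hG1pos k) (hG2pos k))
  -- Step 1: pointwise expansion on Ioi 0
  have hpt : ∀ η ∈ Set.Ioi (0:ℝ), pker a y η t * η ^ a = ∑' k, F k η := by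
    intro η hη
    rw [Set.mem_Ioi] at hη
    have hz : (0:ℝ) < y * η / (2 * t) := by positivity
    rw [pker, besselI, ← tsum_mul_left, ← tsum_mul_right, ← tsum_mul_right]
    refine tsum_congr fun k => ?_
    have hsplit : (y * η / (2 * t) / 2) ^ ((a - 1) / 2 + 2 * (k : ℝ))
        = (y * η / (4 * t)) ^ ((a - 1) / 2) *
          ((y / (4 * t)) ^ (2 * (k : ℝ)) * η ^ (2 * (k : ℝ))) := by
      rw [show y * η / (2 * t) / 2 = y * η / (4 * t) by ring,
        Real.rpow_add (by positivity)]
      congr 1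
      rw [show y * η / (4 * t) = y / (4 * t) * η by ring,
        Real.mul_rpow (by positivity) hη.le]
    have hA : (y * η / (2 * t)) ^ ((1 - a) / 2) * (y * η / (4 * t)) ^ ((a - 1) / 2)
        = 2 ^ ((1 - a) / 2) := by
      rw [show y * η / (4 * t) = y * η / (2 * t) * 2⁻¹ by ring,
        Real.mul_rpow hz.le (by norm_num), ← mul_assoc, ← Real.rpow_add hz,
        show (1 - a) / 2 + (a - 1) / 2 = 0 by ring, Real.rpow_zero, one_mul,
        Real.inv_rpow (by norm_num : (0:ℝ) ≤ 2), ← Real.rpow_neg (by norm_num : (0:ℝ) ≤ 2)]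
      congr 1; ring
    have hC : η ^ a * η ^ (2 * (k : ℝ)) = η ^ (a + 2 * (k : ℝ)) :=
      (Real.rpow_add hη a _).symm
    have hD : Real.exp (-(y ^ 2 + η ^ 2) / (4 * t))
        = Real.exp (-w) * Real.exp (-(1 / (4 * t)) * η ^ 2) := by
      rw [← Real.exp_add]; congr 1; rw [hw]; ring
    have hE : Real.Gamma ((k : ℝ) + (a - 1) / 2 + 1) = Real.Gamma ((k : ℝ) + (a + 1) / 2) := by
      congr 1; ring
    rw [hsplit, hD, hE, hF, hc]
    beta_reduce
    rw [← hA, ← hC]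
    ring
  -- integrability of each term
  have hFint : ∀ k : ℕ, IntegrableOn (F k) (Set.Ioi (0:ℝ)) := by
    intro k
    have hq : (-1:ℝ) < a + 2 * (k : ℝ) := by
      have h0 : (0:ℝ) ≤ (k : ℝ) := Nat.cast_nonneg k
      linarith
    exact (integrableOn_rpow_mul_exp_neg_mul_sq hb hq).const_mul (c k)
  -- value of each term's integral
  have hval : ∀ k : ℕ, ∫ η in Set.Ioi (0:ℝ), F k η
      = Real.exp (-w) * w ^ k / (k.factorial : ℝ) := by
    intro k
    have hq : (-1:ℝ) < a + 2 * (k : ℝ) := by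
      have h0 : (0:ℝ) ≤ (k : ℝ) := Nat.cast_nonneg k
      linarith
    have hbase : ∫ η in Set.Ioi (0:ℝ), η ^ (a + 2*(k:ℝ)) * Real.exp (-(1/(4*t)) * η ^ 2)
        = (1/(4*t)) ^ (-(a + 2*(k:ℝ) + 1)/2) * (1/2) * Real.Gamma ((a + 2*(k:ℝ) + 1)/2) := by
      simp_rw [← Real.rpow_two]
      rw [integral_rpow_mul_exp_neg_mul_rpow two_pos hq hb]
    simp only [hF]
    rw [MeasureTheory.integral_const_mul, hbase]
    have e1 : ((1:ℝ)/(4*t)) ^ (-(a + 2*(k:ℝ) + 1)/2) = (4*t) ^ ((k:ℝ) + (a+1)/2) := by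
      rw [one_div, Real.inv_rpow ht4.le, ← Real.rpow_neg ht4.le]
      congr 1; ring
    have e2 : Real.Gamma ((a + 2*(k:ℝ) + 1)/2) = Real.Gamma ((k:ℝ) + (a+1)/2) := by
      congr 1; ring
    have e3 : (y/(4*t)) ^ (2*(k:ℝ)) = y ^ (2*(k:ℝ)) * ((4*t) ^ (2*(k:ℝ)))⁻¹ := by
      rw [div_eq_mul_inv, Real.mul_rpow hy.le (by positivity), Real.inv_rpow ht4.le]
    have e4 : (4*t) ^ ((k:ℝ) + (a+1)/2) = (4*t) ^ ((k:ℝ)) * (4*t) ^ ((a+1)/2) :=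
      Real.rpow_add ht4 _ _
    have e5 : y ^ (2*(k:ℝ)) * ((4*t) ^ (2*(k:ℝ)))⁻¹ * (4*t) ^ ((k:ℝ)) = w ^ k := by
      rw [show (2*(k:ℝ)) = ((2*k : ℕ):ℝ) by push_cast; ring, Real.rpow_natCast,
        Real.rpow_natCast, Real.rpow_natCast, hw]
      rw [div_pow, ← pow_mul, pow_mul']
      field_simp
      ring
    have e6 : ((4:ℝ)*t) ^ ((a+1)/2) = 2 ^ ((a+1)/2) * (2*t) ^ ((a+1)/2) := by
      rw [show (4:ℝ)*t = 2*(2*t) by ring, Real.mul_rpow (by norm_num) h2t.le]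
    have e7 : (2*t) ^ (-(a+1)/2) * (2*t) ^ ((a+1)/2) = 1 := by
      rw [← Real.rpow_add h2t, show (-(a+1)/2 + (a+1)/2 : ℝ) = 0 by ring, Real.rpow_zero]
    have e8 : (2:ℝ) ^ ((1-a)/2) * 2 ^ ((a+1)/2) = 2 := by
      rw [← Real.rpow_add two_pos, show ((1-a)/2 + (a+1)/2 : ℝ) = 1 by ring, Real.rpow_one]
    simp only [hc]
    rw [e1, e2, e3, e4, e6, hGfact k]
    have hG2 : Real.Gamma ((k:ℝ) + (a+1)/2) ≠ 0 := (hG2pos k).ne'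
    have hfk : (k.factorial : ℝ) ≠ 0 := Nat.cast_ne_zero.mpr k.factorial_ne_zero
    rw [← e5, div_mul_eq_mul_div, div_eq_div_iff (mul_ne_zero hfk hG2) hfk]
    linear_combination (1/2 * Real.exp (-w) * y ^ (2*(k:ℝ)) * ((4*t) ^ (2*(k:ℝ)))⁻¹ *
        (4*t) ^ ((k:ℝ)) * Real.Gamma ((k:ℝ)+(a+1)/2) * (k.factorial:ℝ) *
        (2 ^ ((a+1)/2) * 2 ^ ((1-a)/2))) * e7 +
      (1/2 * Real.exp (-w) * y ^ (2*(k:ℝ)) * ((4*t) ^ (2*(k:ℝ)))⁻¹ *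
        (4*t) ^ ((k:ℝ)) * Real.Gamma ((k:ℝ)+(a+1)/2) * (k.factorial:ℝ)) * e8
  -- summability of the term integrals
  have hsum : Summable (fun k : ℕ => Real.exp (-w) * w ^ k / (k.factorial : ℝ)) := by
    simp_rw [mul_div_assoc]
    exact (Real.summable_pow_div_factorial w).mul_left _
  have hnorm : ∀ k : ℕ, (∫ η in Set.Ioi (0:ℝ), ‖F k η‖) = ∫ η in Set.Ioi (0:ℝ), F k η := by
    intro k
    refine integral_congr_ae ?_
    filter_upwards [ae_restrict_mem measurableSet_Ioi] with η hη
    have hη' : (0:ℝ) < η := hη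
    rw [Real.norm_of_nonneg]
    exact mul_nonneg (hck k).le (by positivity)
  have hsum' : Summable (fun k : ℕ => ∫ η in Set.Ioi (0:ℝ), ‖F k η‖) := by
    have : (fun k : ℕ => ∫ η in Set.Ioi (0:ℝ), ‖F k η‖)
        = fun k => Real.exp (-w) * w ^ k / (k.factorial : ℝ) :=
      funext fun k => (hnorm k).trans (hval k)
    rw [this]; exact hsum
  have hexp : Real.exp w = ∑' n : ℕ, w ^ n / (n.factorial : ℝ) := by
    rw [Real.exp_eq_exp_ℝ]
    exact congrFun NormedSpace.exp_eq_tsum_div w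
  calc ∫ η in Set.Ioi (0:ℝ), pker a y η t * η ^ a
      = ∫ η in Set.Ioi (0:ℝ), ∑' k, F k η :=
        setIntegral_congr_fun measurableSet_Ioi fun η hη => hpt η hη
    _ = ∑' k, ∫ η in Set.Ioi (0:ℝ), F k η :=
        (MeasureTheory.integral_tsum_of_summable_integral_norm (fun k => hFint k) hsum').symm
    _ = ∑' k, Real.exp (-w) * w ^ k / (k.factorial : ℝ) := tsum_congr hval
    _ = Real.exp (-w) * ∑' k, w ^ k / (k.factorial : ℝ) := by
        simp_rw [mul_div_assoc]; exact tsum_mul_left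
    _ = Real.exp (-w) * Real.exp w := by rw [hexp]
    _ = 1 := by rw [← Real.exp_add, neg_add_cancel, Real.exp_zero]
end
end

section
/- Let a > −1. For all y, η > 0 and all s, t > 0, one has the Chapman–Kolmogorov identity p^{(a)}(y,η,s+t) = ∫_0^∞ p^{(a)}(y,ζ,t) p^{(a)}(ζ,η,s) ζ^a dζ. -/
/- Formalization of results from "The structure of the singular set in the thin obstacle
problem for degenerate parabolic equations" by Banerjee, Danielli, Garofalo, Petrosyan.

Points of ℝ^{n+1} are written X = (x,y) with x : Fin n → ℝ and y : ℝ; functions of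
space-time are `U : (Fin n → ℝ) → ℝ → ℝ → ℝ`, with `U x y t`. -/

noncomputable section

open MeasureTheory Filter Topology

namespace CK

open Real Finset
open scoped ENNReal NNReal


/-- ascending factorial -/
def asc (c : ℝ) : ℕ → ℝ
  | 0 => 1
  | n+1 => asc c n * (c + n)

lemma asc_zero (c : ℝ) : asc c 0 = 1 := rfl
lemma asc_succ (c : ℝ) (n : ℕ) : asc c (n+1) = asc c n * (c + n) := rfl

lemma asc_pos {c : ℝ} (hc : 0 < c) (n : ℕ) : 0 < asc c n := by
  induction n with
  | zero => norm_num [asc]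
  | succ n ih =>
    rw [asc_succ]
    have : (0:ℝ) ≤ n := Nat.cast_nonneg n
    positivity

lemma asc_succ_left (c : ℝ) (n : ℕ) : asc c (n+1) = c * asc (c+1) n := by
  induction n with
  | zero => simp [asc]
  | succ n ih => rw [asc_succ, ih, asc_succ]; push_cast; ring

lemma asc_ge {c : ℝ} (hc : 0 < c) (n : ℕ) : min c 1 ≤ asc c n := by
  induction n with
  | zero => simp [asc_zero]
  | succ n ih =>
    rcases Nat.eq_zero_or_pos n with h | h
    · subst h
      simp only [asc_succ, asc_zero, Nat.cast_zero, add_zero, one_mul]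
      exact min_le_left _ _
    · rw [asc_succ]
      calc min c 1 ≤ asc c n * 1 := by rw [mul_one]; exact ih
        _ ≤ asc c n * (c + n) := by
          refine mul_le_mul_of_nonneg_left ?_ (asc_pos hc n).le
          have : (1:ℝ) ≤ n := by exact_mod_cast h
          linarith

lemma Gamma_add_nat {c : ℝ} (hc : 0 < c) (n : ℕ) : Gamma (c + n) = asc c n * Gamma c := by
  induction n with
  | zero => simp [asc_zero]
  | succ n ih =>
    have hne : c + (n:ℝ) ≠ 0 := by positivity
    have h : c + ((n:ℝ)+1) = (c + n) + 1 := by ring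
    push_cast
    rw [h, Real.Gamma_add_one hne, ih, asc_succ]
    ring

lemma chu : ∀ k : ℕ, ∀ c : ℝ, 0 < c → ∀ m : ℕ,
    ∑ N ∈ Finset.range (k+1),
      (k.choose N * m.choose N * N.factorial : ℝ) / asc c N = asc (c+m) k / asc c k := by
  intro k
  induction k with
  | zero =>
    intro c hc m
    simp [asc_zero]
  | succ k ihk =>
    intro c hc m
    induction m with
    | zero =>
      rw [Finset.sum_eq_single 0]
      · simp [asc_zero, div_self (asc_pos hc (k+1)).ne']
      · intro N _ hN
        rcases Nat.exists_eq_succ_of_ne_zero hN with ⟨M, rfl⟩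
        simp [Nat.choose_eq_zero_of_lt (Nat.succ_pos M)]
      · intro h; exact absurd (Finset.mem_range.mpr (Nat.succ_pos _)) h
    | succ m ihm =>
      have key : ∑ N ∈ Finset.range (k+2),
          ((k+1).choose N * (m+1).choose N * N.factorial : ℝ) / asc c N
          = (∑ N ∈ Finset.range (k+2),
              ((k+1).choose N * m.choose N * N.factorial : ℝ) / asc c N)
            + ∑ N ∈ Finset.range (k+1),
              ((k+1).choose (N+1) * m.choose N * (N+1).factorial : ℝ) / asc c (N+1) := by
        rw [Finset.sum_range_succ' (fun N => ((k+1).choose N * (m+1).choose N * N.factorial : ℝ) / asc c N),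
          Finset.sum_range_succ' (fun N => ((k+1).choose N * m.choose N * N.factorial : ℝ) / asc c N)]
        simp only [Nat.choose_zero_right, Nat.choose_succ_succ]
        rw [add_right_comm, ← Finset.sum_add_distrib]
        congr 1
        · refine Finset.sum_congr rfl fun N _ => ?_
          push_cast
          ring
      have extra : ∑ N ∈ Finset.range (k+1),
          ((k+1).choose (N+1) * m.choose N * (N+1).factorial : ℝ) / asc c (N+1)
          = ((k:ℝ)+1)/c * ∑ N ∈ Finset.range (k+1),
              (k.choose N * m.choose N * N.factorial : ℝ) / asc (c+1) N := by
        rw [Finset.mul_sum]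
        refine Finset.sum_congr rfl fun N _ => ?_
        have h1 : ((k+1).choose (N+1) * (N+1) : ℝ) = (k+1) * k.choose N := by
          have := Nat.add_one_mul_choose_eq k N
          exact_mod_cast congrArg (fun x : ℕ => (x:ℝ)) this.symm
        have h2 : asc c (N+1) = c * asc (c+1) N := asc_succ_left c N
        have hne : asc (c+1) N ≠ 0 := (asc_pos (by linarith) N).ne'
        rw [h2, Nat.factorial_succ]
        push_cast
        rw [div_mul_div_comm, div_eq_div_iff (mul_ne_zero hc.ne' hne) (mul_ne_zero hc.ne' hne)]
        linear_combination ((m.choose N : ℝ) * N.factorial * (c * asc (c+1) N)) * h1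
      rw [key, extra, ihm, ihk (c+1) (by linarith) m]
      have h1 : asc c (k+2) = c * asc (c+1) (k+1) := asc_succ_left c (k+1)
      have h2 : asc (c+1) (k+1) = asc (c+1) k * (c+1+k) := asc_succ _ _
      have e1 : asc (c+(m:ℝ)) (k+1) = (c+(m:ℝ)) * asc (c+(m:ℝ)+1) k := asc_succ_left _ k
      have e2 : asc (c+(m:ℝ)+1) (k+1) = asc (c+(m:ℝ)+1) k * (c+(m:ℝ)+1+k) := asc_succ _ k
      have e3 : asc (c+1+(m:ℝ)) k = asc (c+(m:ℝ)+1) k := by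
        rw [show c+1+(m:ℝ) = c+(m:ℝ)+1 by ring]
      have e4 : asc c (k+1) = c * asc (c+1) k := asc_succ_left c k
      have e5 : c + ((m:ℝ)+1) = c+(m:ℝ)+1 := by ring
      push_cast
      rw [e3, e1, e4, e5, e2]
      have hp1 : (0:ℝ) < asc (c+1) k := asc_pos (by linarith) k
      field_simp
      ring


lemma coeffE {c : ℝ} (hc : 0 < c) (k m : ℕ) :
    ∑ N ∈ Finset.range (min k m + 1),
      (1:ℝ) / ((k-N).factorial * (m-N).factorial * N.factorial * Gamma (c+N))
    = Gamma (c+k+m) / (k.factorial * m.factorial * Gamma (c+k) * Gamma (c+m)) := by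
  have hG : (0:ℝ) < Gamma c := Real.Gamma_pos_of_pos hc
  have step1 : ∀ N ∈ Finset.range (min k m + 1),
      (1:ℝ) / ((k-N).factorial * (m-N).factorial * N.factorial * Gamma (c+N))
      = (k.choose N * m.choose N * N.factorial : ℝ) / asc c N
          / (k.factorial * m.factorial * Gamma c) := by
    intro N hN
    rw [Finset.mem_range, Nat.lt_succ_iff] at hN
    have hNk : N ≤ k := le_trans hN (min_le_left _ _)
    have hNm : N ≤ m := le_trans hN (min_le_right _ _)
    have hk := Nat.choose_mul_factorial_mul_factorial hNk
    have hm := Nat.choose_mul_factorial_mul_factorial hNm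
    have hkR : (k.choose N : ℝ) = k.factorial / (N.factorial * (k-N).factorial) := by
      rw [eq_div_iff (by positivity)]
      push_cast [← hk]
      ring
    have hmR : (m.choose N : ℝ) = m.factorial / (N.factorial * (m-N).factorial) := by
      rw [eq_div_iff (by positivity)]
      push_cast [← hm]
      ring
    have ha : (0:ℝ) < asc c N := asc_pos hc N
    have f1 : (0:ℝ) < (k-N).factorial := by positivity
    have f2 : (0:ℝ) < (m-N).factorial := by positivity
    have f3 : (0:ℝ) < (N.factorial:ℝ) := by positivity
    have f4 : (0:ℝ) < (k.factorial:ℝ) := by positivity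
    have f5 : (0:ℝ) < (m.factorial:ℝ) := by positivity
    rw [hkR, hmR, Gamma_add_nat hc N]
    field_simp
  rw [Finset.sum_congr rfl step1, ← Finset.sum_div]
  have ext : ∑ N ∈ Finset.range (min k m + 1),
        (k.choose N * m.choose N * N.factorial : ℝ) / asc c N
      = ∑ N ∈ Finset.range (k + 1),
        (k.choose N * m.choose N * N.factorial : ℝ) / asc c N := by
    apply Finset.sum_subset
    · intro x hx
      rw [Finset.mem_range] at *
      omega
    · intro N hN hN2
      rw [Finset.mem_range] at *
      have : m < N := by omega
      simp [Nat.choose_eq_zero_of_lt this]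
  rw [ext, chu k c hc m]
  have hcm : (0:ℝ) < c + m := by
    have := Nat.cast_nonneg (α := ℝ) m
    linarith
  rw [show c+(k:ℝ)+(m:ℝ) = (c+(m:ℝ))+(k:ℝ) by ring, Gamma_add_nat hcm k,
    Gamma_add_nat hc k, Gamma_add_nat hc m]
  have p1 : (0:ℝ) < asc c k := asc_pos hc k
  have p2 : (0:ℝ) < asc c m := asc_pos hc m
  have p3 : (0:ℝ) < asc (c+m) k := asc_pos hcm k
  have f4 : (0:ℝ) < (k.factorial:ℝ) := by positivity
  have f5 : (0:ℝ) < (m.factorial:ℝ) := by positivity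
  field_simp



lemma Gamma_cpos {c : ℝ} (hc : 0 < c) (k : ℕ) : 0 < Gamma (c + k) := by
  apply Real.Gamma_pos_of_pos
  have : (0:ℝ) ≤ k := Nat.cast_nonneg k
  linarith

lemma Gamma_ck_ge {c : ℝ} (hc : 0 < c) (k : ℕ) :
    min c 1 * Gamma c ≤ Gamma (c + k) := by
  rw [Gamma_add_nat hc k]
  exact mul_le_mul_of_nonneg_right (asc_ge hc k) (Real.Gamma_pos_of_pos hc).le

lemma summable_ser {c : ℝ} (hc : 0 < c) (w : ℝ) (hw : 0 ≤ w) :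
    Summable (fun k : ℕ => w ^ k / (k.factorial * Gamma (c + k))) := by
  have hG : (0:ℝ) < Gamma c := Real.Gamma_pos_of_pos hc
  have hmin : (0:ℝ) < min c 1 := lt_min hc one_pos
  refine Summable.of_nonneg_of_le (fun k => by positivity) (fun k => ?_)
    ((Real.summable_pow_div_factorial w).mul_left (1/(min c 1 * Gamma c)))
  have h1 : (0:ℝ) < Gamma (c + k) := Gamma_cpos hc k
  have h2 := Gamma_ck_ge hc k
  have hf : (0:ℝ) < (k.factorial : ℝ) := by positivity
  calc w ^ k / (k.factorial * Gamma (c+k))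
      ≤ w ^ k / (k.factorial * (min c 1 * Gamma c)) := by
        gcongr
        try exact Or.inl trivial
    _ = 1 / (min c 1 * Gamma c) * (w ^ k / k.factorial) := by
        ring
  
lemma pker_eq {a y η t : ℝ} (hy : 0 < y) (hη : 0 < η) (ht : 0 < t) :
    pker a y η t = 2 * (1/(4*t)) ^ ((a+1)/2) * Real.exp (-(1/(4*t)) * (y^2+η^2)) *
      ∑' k : ℕ, (1/(4*t) * y * η) ^ (2*k) / (k.factorial * Gamma ((a+1)/2 + k)) := by
  have h2t : (0:ℝ) < 2*t := by linarith
  have hz : (0:ℝ) < y * η / (2*t) := by positivity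
  have hz2 : (0:ℝ) < y * η / (2*t) / 2 := by positivity
  have h4t : (0:ℝ) < 1/(4*t) := by positivity
  have hb : besselI ((a-1)/2) (y*η/(2*t))
      = (y*η/(2*t)/2) ^ ((a-1)/2) *
        ∑' k : ℕ, (1/(4*t)*y*η) ^ (2*k) / (k.factorial * Gamma ((a+1)/2 + k)) := by
    rw [besselI, ← tsum_mul_left]
    apply tsum_congr
    intro k
    have e1 : (y*η/(2*t)/2) ^ ((a-1)/2 + 2*(k:ℝ))
        = (y*η/(2*t)/2) ^ ((a-1)/2) * (y*η/(2*t)/2) ^ (2*k : ℕ) := by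
      rw [Real.rpow_add hz2, ← Real.rpow_natCast (y*η/(2*t)/2) (2*k)]
      push_cast
      ring_nf
    have e2 : (y*η/(2*t)/2) = 1/(4*t)*y*η := by field_simp; ring
    have e3 : Real.Gamma ((k:ℝ) + 1) = k.factorial := Real.Gamma_nat_eq_factorial k
    have e4 : (k:ℝ) + (a-1)/2 + 1 = (a+1)/2 + k := by ring
    rw [e1, e2, e3, e4]
    ring
  have hconst : (2*t) ^ (-(a+1)/2) * (y*η/(2*t)) ^ ((1-a)/2) * (y*η/(2*t)/2) ^ ((a-1)/2)
      = 2 * (1/(4*t)) ^ ((a+1)/2) := by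
    have h2e : (2:ℝ) * (1/(4*t)) ^ ((a+1)/2)
        = Real.exp (Real.log 2 + Real.log (1/(4*t)) * ((a+1)/2)) := by
      rw [Real.exp_add, Real.exp_log two_pos, Real.rpow_def_of_pos h4t]
    rw [Real.rpow_def_of_pos h2t, Real.rpow_def_of_pos hz, Real.rpow_def_of_pos hz2, h2e,
      ← Real.exp_add, ← Real.exp_add]
    congr 1
    have l1 : Real.log (2*t) = Real.log 2 + Real.log t := Real.log_mul two_ne_zero ht.ne'
    have l2 : Real.log (y*η/(2*t)) = Real.log y + Real.log η - (Real.log 2 + Real.log t) := by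
      rw [Real.log_div (by positivity) h2t.ne', Real.log_mul hy.ne' hη.ne', l1]
    have l3 : Real.log (y*η/(2*t)/2)
        = Real.log y + Real.log η - (Real.log 2 + Real.log t) - Real.log 2 := by
      rw [Real.log_div (by positivity) two_ne_zero, l2]
    have l4 : Real.log (1/(4*t)) = -(Real.log 2 + Real.log 2 + Real.log t) := by
      rw [one_div, Real.log_inv, show (4:ℝ)*t = 2*(2*t) by ring,
        Real.log_mul two_ne_zero h2t.ne', l1]
      ring
    rw [l1, l2, l3, l4]
    ring
  rw [pker, hb, show -(y^2+η^2)/(4*t) = -(1/(4*t))*(y^2+η^2) by ring]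
  linear_combination ((∑' k : ℕ, (1/(4*t)*y*η) ^ (2*k) / (k.factorial * Gamma ((a+1)/2 + k))) *
    Real.exp (-(1/(4*t))*(y^2+η^2))) * hconst




lemma tsum_shift (f : ℕ → ℝ≥0∞) (N : ℕ) :
    ∑' k : ℕ, (if N ≤ k then f (k - N) else 0) = ∑' p, f p := by
  have h := Function.Injective.tsum_eq
    (f := fun k : ℕ => if N ≤ k then f (k - N) else 0)
    (g := fun p : ℕ => p + N) (fun a b h => by simpa using h) ?_
  · rw [← h]
    simp
  · intro k hk
    rcases le_or_gt N k with h | h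
    · exact ⟨k - N, by simp; omega⟩
    · exfalso
      apply hk
      simp [Nat.not_le.mpr h, Function.support]

lemma tsum_ofReal_key {c x z : ℝ} (hc : 0 < c) (hx : 0 ≤ x) (hz : 0 ≤ z) :
    ∑' km : ℕ × ℕ, ENNReal.ofReal (x^km.1 * z^km.2 * Gamma (c+km.1+km.2) /
        (km.1.factorial * km.2.factorial * Gamma (c+km.1) * Gamma (c+km.2)))
    = ENNReal.ofReal (Real.exp (x+z) *
        ∑' N : ℕ, (x*z)^N / (N.factorial * Gamma (c+N))) := by
  set P : ℕ → ℝ≥0∞ := fun p => ENNReal.ofReal (x^p / p.factorial) with hP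
  set Q : ℕ → ℝ≥0∞ := fun q => ENNReal.ofReal (z^q / q.factorial) with hQ
  set R : ℕ → ℝ≥0∞ := fun N => ENNReal.ofReal ((x*z)^N / (N.factorial * Gamma (c+N))) with hR
  have hsum : Summable (fun N : ℕ => (x*z)^N / (N.factorial * Gamma (c+N))) :=
    summable_ser hc _ (by positivity)
  have hrhs : ENNReal.ofReal (Real.exp (x+z) * ∑' N : ℕ, (x*z)^N / (N.factorial * Gamma (c+N)))
      = (∑' p, P p) * (∑' q, Q q) * (∑' N, R N) := by
    have hS0 : (0:ℝ) ≤ ∑' N : ℕ, (x*z)^N / (N.factorial * Gamma (c+N)) :=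
      tsum_nonneg fun N => by
        have := Gamma_cpos hc N
        positivity
    rw [Real.exp_add, mul_assoc, ENNReal.ofReal_mul (Real.exp_pos x).le,
      ENNReal.ofReal_mul (Real.exp_pos z).le]
    have ex : ENNReal.ofReal (Real.exp x) = ∑' p, P p := by
      rw [Real.exp_eq_exp_ℝ, NormedSpace.exp_eq_tsum_div]
      exact ENNReal.ofReal_tsum_of_nonneg (fun p => by positivity)
        (Real.summable_pow_div_factorial x)
    have ez : ENNReal.ofReal (Real.exp z) = ∑' q, Q q := by
      rw [Real.exp_eq_exp_ℝ, NormedSpace.exp_eq_tsum_div]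
      exact ENNReal.ofReal_tsum_of_nonneg (fun q => by positivity)
        (Real.summable_pow_div_factorial z)
    have eS : ENNReal.ofReal (∑' N : ℕ, (x*z)^N / (N.factorial * Gamma (c+N))) = ∑' N, R N :=
      ENNReal.ofReal_tsum_of_nonneg (fun N => by
        have := Gamma_cpos hc N
        positivity) hsum
    rw [ex, ez, eS]
    ring
  rw [hrhs]
  have hterm : ∀ k m : ℕ, ENNReal.ofReal (x^k * z^m * Gamma (c+k+m) /
      (k.factorial * m.factorial * Gamma (c+k) * Gamma (c+m)))
      = ∑' N : ℕ, (if N ≤ k ∧ N ≤ m then P (k-N) * Q (m-N) * R N else 0) := by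
    intro k m
    rw [tsum_eq_sum (s := Finset.range (min k m + 1))
      (fun N hN => by
        rw [Finset.mem_range] at hN
        have : ¬(N ≤ k ∧ N ≤ m) := by omega
        rw [if_neg this])]
    have h1 : ∀ N ∈ Finset.range (min k m + 1),
        (if N ≤ k ∧ N ≤ m then P (k-N) * Q (m-N) * R N else 0)
        = ENNReal.ofReal (x^k * z^m *
            ((1:ℝ) / ((k-N).factorial * (m-N).factorial * N.factorial * Gamma (c+N)))) := by
      intro N hN
      rw [Finset.mem_range, Nat.lt_succ_iff, le_min_iff] at hN
      have hΓ := Gamma_cpos hc N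
      rw [if_pos ⟨hN.1, hN.2⟩, hP, hQ, hR]
      rw [← ENNReal.ofReal_mul (by positivity), ← ENNReal.ofReal_mul (by positivity)]
      congr 1
      have e1 : x ^ (k-N) * x ^ N = x ^ k := by
        rw [← pow_add]
        congr 1
        omega
      have e2 : z ^ (m-N) * z ^ N = z ^ m := by
        rw [← pow_add]
        congr 1
        omega
      rw [mul_pow, div_mul_div_comm, div_mul_div_comm,
        show x^(k-N) * z^(m-N) * (x^N*z^N) = (x^(k-N)*x^N)*(z^(m-N)*z^N) by ring, e1, e2]
      ring
    rw [Finset.sum_congr rfl h1,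
      ← ENNReal.ofReal_sum_of_nonneg (fun N hN => by
        have := Gamma_cpos hc N
        positivity),
      ← Finset.mul_sum, coeffE hc k m]
    congr 1
    ring
  calc ∑' km : ℕ × ℕ, ENNReal.ofReal (x^km.1 * z^km.2 * Gamma (c+km.1+km.2) /
        (km.1.factorial * km.2.factorial * Gamma (c+km.1) * Gamma (c+km.2)))
      = ∑' (k : ℕ) (m : ℕ) (N : ℕ),
          (if N ≤ k ∧ N ≤ m then P (k-N) * Q (m-N) * R N else 0) := by
        rw [ENNReal.tsum_prod']
        exact tsum_congr fun k => tsum_congr fun m => hterm k m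
    _ = ∑' (k : ℕ) (N : ℕ) (m : ℕ),
          (if N ≤ k ∧ N ≤ m then P (k-N) * Q (m-N) * R N else 0) :=
        tsum_congr fun k => ENNReal.tsum_comm
    _ = ∑' (N : ℕ) (k : ℕ) (m : ℕ),
          (if N ≤ k ∧ N ≤ m then P (k-N) * Q (m-N) * R N else 0) := ENNReal.tsum_comm
    _ = (∑' p, P p) * (∑' q, Q q) * (∑' N, R N) := by
        have hsplit : ∀ N k m : ℕ, (if N ≤ k ∧ N ≤ m then P (k-N) * Q (m-N) * R N else 0)
            = (if N ≤ k then P (k-N) else 0) * ((if N ≤ m then Q (m-N) else 0) * R N) := by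
          intro N k m
          by_cases h1 : N ≤ k <;> by_cases h2 : N ≤ m <;> simp [h1, h2, mul_assoc]
        have step : ∀ N : ℕ, (∑' (k : ℕ) (m : ℕ),
            (if N ≤ k ∧ N ≤ m then P (k-N) * Q (m-N) * R N else 0))
            = (∑' p, P p) * ((∑' q, Q q) * R N) := by
          intro N
          simp_rw [hsplit, ENNReal.tsum_mul_left, ENNReal.tsum_mul_right, tsum_shift P N,
            tsum_shift Q N]
        rw [tsum_congr step, ENNReal.tsum_mul_left, ENNReal.tsum_mul_left, ← mul_assoc]


end CK

open Real Finset in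

/-- the Chapman–Kolmogorov identity for the Bessel heat kernel. -/
theorem bessel_kernel_chapman_kolmogorov (a : ℝ) (ha : -1 < a)
    (y η s t : ℝ) (hy : 0 < y) (hη : 0 < η) (hs : 0 < s) (ht : 0 < t) :
    pker a y η (s + t) = ∫ ζ in Set.Ioi (0 : ℝ), pker a y ζ t * pker a ζ η s * ζ ^ a := by
  have hc : 0 < (a+1)/2 := by linarith
  set c := (a+1)/2 with hc_def
  set A := 1/(4*t) with hA_def
  set B := 1/(4*s) with hB_def
  have hA : 0 < A := by rw [hA_def]; positivity
  have hB : 0 < B := by rw [hB_def]; positivity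
  set S := A + B with hS_def
  have hS : 0 < S := by positivity
  set X := A^2*y^2/S with hX_def
  set Z := B^2*η^2/S with hZ_def
  have hX : 0 ≤ X := by positivity
  have hZ : 0 ≤ Z := by positivity
  set K2 := 2 * A^c * B^c / S^c * Real.exp (-(A*y^2) - B*η^2) with hK2_def
  have hK2 : 0 < K2 := by
    rw [hK2_def]
    positivity
  -- LHS closed form
  have hL : pker a y η (s+t)
      = K2 * (Real.exp (X+Z) * ∑' N : ℕ, (X*Z)^N / (N.factorial * Gamma (c+N))) := by
    rw [CK.pker_eq hy hη (by linarith : (0:ℝ) < s+t), ← hc_def]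
    have hst : (s+t) ≠ 0 := by positivity
    have hbase : (1/(4*(s+t)) * y * η)^2 = X*Z := by
      rw [hX_def, hZ_def, hS_def, hA_def, hB_def]
      field_simp
    have hAB : 1/(4*(s+t)) = A*B/S := by
      rw [hS_def, hA_def, hB_def]
      field_simp
    have hAc : (1/(4*(s+t)))^c = A^c*B^c/S^c := by
      rw [hAB, Real.div_rpow (by positivity) hS.le, Real.mul_rpow hA.le hB.le]
    have hexp : -(1/(4*(s+t))) * (y^2+η^2) = (-(A*y^2) - B*η^2) + (X+Z) := by
      rw [hAB, hX_def, hZ_def, hS_def, hA_def, hB_def]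
      field_simp
      ring
    rw [hAc, hexp, Real.exp_add]
    simp_rw [pow_mul, hbase]
    rw [hK2_def]
    ring
  -- coefficient function
  set W : ℕ × ℕ → ℝ := fun km => X^km.1 * Z^km.2 * Gamma (c+km.1+km.2) /
      (km.1.factorial * km.2.factorial * Gamma (c+km.1) * Gamma (c+km.2)) with hW_def
  have hG3 : ∀ km : ℕ × ℕ, (0:ℝ) < Gamma (c + km.1 + km.2) := by
    intro km
    apply Real.Gamma_pos_of_pos
    have h1 : (0:ℝ) ≤ (km.1:ℝ) := Nat.cast_nonneg _
    have h2 : (0:ℝ) ≤ (km.2:ℝ) := Nat.cast_nonneg _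
    linarith
  have hW0 : ∀ km : ℕ × ℕ, 0 ≤ W km := by
    intro km
    have g1 := CK.Gamma_cpos hc km.1
    have g2 := CK.Gamma_cpos hc km.2
    have g3 := hG3 km
    rw [hW_def]
    positivity
  set K1 := 4 * A^c * B^c * Real.exp (-(A*y^2) - B*η^2) with hK1_def
  set F : ℕ × ℕ → ℝ → ℝ := fun km ζ =>
    K1 * ((A*y)^(2*km.1) * (B*η)^(2*km.2) /
      (km.1.factorial * km.2.factorial * Gamma (c+km.1) * Gamma (c+km.2))) *
      (ζ ^ (a + 2*km.1 + 2*km.2 : ℝ) * Real.exp (-S * ζ^2)) with hF_def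
  -- pointwise expansion of the integrand
  have step1 : ∀ ζ ∈ Set.Ioi (0:ℝ),
      pker a y ζ t * pker a ζ η s * ζ ^ a = ∑' km : ℕ × ℕ, F km ζ := by
    intro ζ hζ
    rw [Set.mem_Ioi] at hζ
    rw [CK.pker_eq hy hζ ht, CK.pker_eq hζ hη hs, ← hA_def, ← hB_def, ← hc_def]
    have hu : Summable (fun k : ℕ => (A*y*ζ)^(2*k) / (k.factorial * Gamma (c+k))) := by
      refine (CK.summable_ser hc ((A*y*ζ)^2) (sq_nonneg _)).congr fun k => ?_
      rw [← pow_mul]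
    have hv : Summable (fun m : ℕ => (B*ζ*η)^(2*m) / (m.factorial * Gamma (c+m))) := by
      refine (CK.summable_ser hc ((B*ζ*η)^2) (sq_nonneg _)).congr fun m => ?_
      rw [← pow_mul]
    have hu0 : ∀ k : ℕ, 0 ≤ (A*y*ζ)^(2*k) / (k.factorial * Gamma (c+k)) := fun k => by
      have := CK.Gamma_cpos hc k
      positivity
    have hv0 : ∀ m : ℕ, 0 ≤ (B*ζ*η)^(2*m) / (m.factorial * Gamma (c+m)) := fun m => by
      have := CK.Gamma_cpos hc m
      positivity
    have hprod : (∑' k : ℕ, (A*y*ζ)^(2*k) / (k.factorial * Gamma (c+k)))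
        * (∑' m : ℕ, (B*ζ*η)^(2*m) / (m.factorial * Gamma (c+m)))
        = ∑' km : ℕ × ℕ, ((A*y*ζ)^(2*km.1) / (km.1.factorial * Gamma (c+km.1)))
            * ((B*ζ*η)^(2*km.2) / (km.2.factorial * Gamma (c+km.2))) := by
      apply tsum_mul_tsum_of_summable_norm
      · exact hu.congr fun k => (Real.norm_of_nonneg (hu0 k)).symm
      · exact hv.congr fun m => (Real.norm_of_nonneg (hv0 m)).symm
    have hE : Real.exp (-A*(y^2+ζ^2)) * Real.exp (-B*(ζ^2+η^2))
        = Real.exp (-(A*y^2) - B*η^2) * Real.exp (-S*ζ^2) := by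
      rw [← Real.exp_add, ← Real.exp_add, hS_def]
      congr 1
      ring
    calc (2 * A^c * Real.exp (-A*(y^2+ζ^2))
            * ∑' k : ℕ, (A*y*ζ)^(2*k) / (k.factorial * Gamma (c+k)))
          * (2 * B^c * Real.exp (-B*(ζ^2+η^2))
            * ∑' m : ℕ, (B*ζ*η)^(2*m) / (m.factorial * Gamma (c+m))) * ζ ^ a
        = (Real.exp (-A*(y^2+ζ^2)) * Real.exp (-B*(ζ^2+η^2)))
            * ((4 * A^c * B^c * ζ ^ a)
              * ((∑' k : ℕ, (A*y*ζ)^(2*k) / (k.factorial * Gamma (c+k)))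
                * ∑' m : ℕ, (B*ζ*η)^(2*m) / (m.factorial * Gamma (c+m)))) := by ring
      _ = ∑' km : ℕ × ℕ,
            (Real.exp (-(A*y^2) - B*η^2) * Real.exp (-S*ζ^2) * (4 * A^c * B^c * ζ ^ a))
              * (((A*y*ζ)^(2*km.1) / (km.1.factorial * Gamma (c+km.1)))
                * ((B*ζ*η)^(2*km.2) / (km.2.factorial * Gamma (c+km.2)))) := by
          rw [hE, hprod, tsum_mul_left]
          ring
      _ = ∑' km : ℕ × ℕ, F km ζ := by
          refine tsum_congr fun km => ?_
          rw [hF_def, hK1_def]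
          have hzpow : (ζ : ℝ) ^ (a + 2*(km.1:ℝ) + 2*(km.2:ℝ))
              = ζ ^ a * ζ ^ (2*km.1 : ℕ) * ζ ^ (2*km.2 : ℕ) := by
            rw [show (a + 2*(km.1:ℝ) + 2*(km.2:ℝ))
                = a + ((2*km.1 : ℕ):ℝ) + ((2*km.2 : ℕ):ℝ) by push_cast; ring,
              Real.rpow_add hζ, Real.rpow_add hζ, Real.rpow_natCast, Real.rpow_natCast]
          have e1 : (A*y*ζ)^(2*km.1) = (A*y)^(2*km.1) * ζ^(2*km.1) := by
            rw [mul_pow]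
          have e2 : (B*ζ*η)^(2*km.2) = (B*η)^(2*km.2) * ζ^(2*km.2) := by
            rw [show B*ζ*η = B*η*ζ by ring, mul_pow]
          simp only []
          rw [hzpow, e1, e2]
          ring
  -- value of each term integral
  have hFval : ∀ km : ℕ × ℕ, ∫ ζ in Set.Ioi (0:ℝ), F km ζ = K2 * W km := by
    intro km
    obtain ⟨k, m⟩ := km
    have hq : (-1:ℝ) < a + 2*k + 2*m := by
      have h1 : (0:ℝ) ≤ (k:ℝ) := Nat.cast_nonneg _
      have h2 : (0:ℝ) ≤ (m:ℝ) := Nat.cast_nonneg _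
      linarith
    have hval : ∫ ζ in Set.Ioi (0:ℝ), ζ ^ (a + 2*(k:ℝ) + 2*(m:ℝ)) * Real.exp (-S * ζ^2)
        = S ^ (-(a + 2*(k:ℝ) + 2*(m:ℝ) + 1)/2) * (1/2)
          * Gamma ((a + 2*(k:ℝ) + 2*(m:ℝ) + 1)/2) := by
      have h2 := integral_rpow_mul_exp_neg_mul_rpow (p := 2) (q := a + 2*(k:ℝ) + 2*(m:ℝ))
        two_pos hq hS
      simp_rw [show ∀ x : ℝ, x ^ (2:ℝ) = x ^ (2:ℕ) from fun x => by
        rw [← Real.rpow_natCast x 2]; norm_num] at h2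
      rw [h2]
    have harr : (a + 2*(k:ℝ) + 2*(m:ℝ) + 1)/2 = c + (k:ℝ) + (m:ℝ) := by
      rw [hc_def]; ring
    have hSpow : S ^ (-(a + 2*(k:ℝ) + 2*(m:ℝ) + 1)/2)
        = (S^c)⁻¹ * (S^(k:ℕ))⁻¹ * (S^(m:ℕ))⁻¹ := by
      rw [show (-(a + 2*(k:ℝ) + 2*(m:ℝ) + 1)/2) = -(c + (k:ℝ) + (m:ℝ)) by rw [hc_def]; ring,
        Real.rpow_neg hS.le, Real.rpow_add hS, Real.rpow_add hS,
        Real.rpow_natCast, Real.rpow_natCast]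
      rw [mul_inv, mul_inv]
    have hint : ∫ ζ in Set.Ioi (0:ℝ), F (k, m) ζ
        = K1 * ((A*y)^(2*k) * (B*η)^(2*m) /
            (k.factorial * m.factorial * Gamma (c+k) * Gamma (c+m)))
          * ((S^c)⁻¹ * (S^(k:ℕ))⁻¹ * (S^(m:ℕ))⁻¹ * (1/2) * Gamma (c + (k:ℝ) + (m:ℝ))) := by
      rw [hF_def]
      simp only []
      rw [MeasureTheory.integral_const_mul, hval, harr, hSpow]
    rw [hint, hW_def, hK1_def, hK2_def, hX_def, hZ_def]
    simp only []
    have hg1 := CK.Gamma_cpos hc k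
    have hg2 := CK.Gamma_cpos hc m
    have hf1 : (0:ℝ) < (k.factorial:ℝ) := by positivity
    have hf2 : (0:ℝ) < (m.factorial:ℝ) := by positivity
    have hSc : (0:ℝ) < S^c := Real.rpow_pos_of_pos hS c
    have hSk : (0:ℝ) < S^(k:ℕ) := pow_pos hS k
    have hSm : (0:ℝ) < S^(m:ℕ) := pow_pos hS m
    have e1 : (A*y)^(2*k) = (A^2*y^2)^k := by rw [pow_mul]; ring_nf
    have e2 : (B*η)^(2*m) = (B^2*η^2)^m := by rw [pow_mul]; ring_nf
    have e3 : (A^2*y^2/S)^k = (A^2*y^2)^k / S^k := div_pow _ _ _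
    have e4 : (B^2*η^2/S)^m = (B^2*η^2)^m / S^m := div_pow _ _ _
    rw [e1, e2, e3, e4]
    field_simp
    ring
  -- measurability
  have hFmeas : ∀ km : ℕ × ℕ, AEStronglyMeasurable (F km) (volume.restrict (Set.Ioi 0)) := by
    intro km
    apply ContinuousOn.aestronglyMeasurable ?_ measurableSet_Ioi
    apply ContinuousOn.mul continuousOn_const
    apply ContinuousOn.mul
    · intro ζ hζ
      exact (Real.continuousAt_rpow_const ζ _ (Or.inl (ne_of_gt hζ))).continuousWithinAt
    · exact (Real.continuous_exp.comp (continuous_const.mul (continuous_pow 2))).continuousOn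
  -- integrability and positivity of terms
  have hFint : ∀ km : ℕ × ℕ, IntegrableOn (F km) (Set.Ioi 0) := by
    intro km
    have hq : (-1:ℝ) < a + 2*km.1 + 2*km.2 := by
      have h1 : (0:ℝ) ≤ (km.1:ℝ) := Nat.cast_nonneg _
      have h2 : (0:ℝ) ≤ (km.2:ℝ) := Nat.cast_nonneg _
      linarith
    exact (integrableOn_rpow_mul_exp_neg_mul_sq hS hq).const_mul _
  have hFnn : ∀ km : ℕ × ℕ, 0 ≤ᵐ[volume.restrict (Set.Ioi 0)] F km := by
    intro km
    refine (ae_restrict_iff' measurableSet_Ioi).mpr (Filter.Eventually.of_forall fun ζ hζ => ?_)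
    rw [Set.mem_Ioi] at hζ
    rw [hF_def]
    simp only []
    have g1 := CK.Gamma_cpos hc km.1
    have g2 := CK.Gamma_cpos hc km.2
    have hrp : (0:ℝ) ≤ ζ ^ (a + 2*(km.1:ℝ) + 2*(km.2:ℝ)) := Real.rpow_nonneg hζ.le _
    have hK1' : (0:ℝ) < K1 := by rw [hK1_def]; positivity
    positivity
  -- the total mass identity in ℝ≥0∞
  have hofsum : ∑' km : ℕ × ℕ, ENNReal.ofReal (K2 * W km)
      = ENNReal.ofReal (pker a y η (s+t)) := by
    simp_rw [ENNReal.ofReal_mul hK2.le]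
    rw [ENNReal.tsum_mul_left, hW_def]
    simp only []
    rw [CK.tsum_ofReal_key hc hX hZ, ← ENNReal.ofReal_mul hK2.le, ← hL]
  have hlint : ∀ km : ℕ × ℕ,
      (∫⁻ ζ in Set.Ioi (0:ℝ), ‖F km ζ‖₊) = ENNReal.ofReal (K2 * W km) := by
    intro km
    have h1 : (∫⁻ ζ in Set.Ioi (0:ℝ), ‖F km ζ‖₊)
        = ∫⁻ ζ in Set.Ioi (0:ℝ), ENNReal.ofReal (F km ζ) :=
      lintegral_congr_ae ((hFnn km).mono fun ζ h => Real.enorm_eq_ofReal h)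
    rw [h1, ← MeasureTheory.ofReal_integral_eq_lintegral_ofReal (hFint km) (hFnn km), hFval km]
  have hne : (∑' km : ℕ × ℕ, ∫⁻ ζ in Set.Ioi (0:ℝ), ‖F km ζ‖₊) ≠ ⊤ := by
    simp_rw [hlint]
    rw [hofsum]
    exact ENNReal.ofReal_ne_top
  -- real summability and value of the sum
  have hKW0 : ∀ km : ℕ × ℕ, 0 ≤ K2 * W km := fun km => mul_nonneg hK2.le (hW0 km)
  have hsumE : Summable (fun km : ℕ × ℕ => K2 * W km) := by
    have h1 : (∑' km : ℕ × ℕ, ENNReal.ofReal (K2 * W km)) ≠ ⊤ := by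
      rw [hofsum]
      exact ENNReal.ofReal_ne_top
    exact (ENNReal.summable_toReal h1).congr fun km => ENNReal.toReal_ofReal (hKW0 km)
  have hpker0 : 0 ≤ pker a y η (s+t) := by
    rw [hL]
    have hts0 : 0 ≤ ∑' N : ℕ, (X*Z)^N / (N.factorial * Gamma (c+N)) :=
      tsum_nonneg fun N => by
        have := CK.Gamma_cpos hc N
        positivity
    exact mul_nonneg hK2.le (mul_nonneg (Real.exp_pos _).le hts0)
  have hsum_val : ∑' km : ℕ × ℕ, K2 * W km = pker a y η (s+t) := by
    have h3 : ENNReal.ofReal (∑' km : ℕ × ℕ, K2 * W km)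
        = ENNReal.ofReal (pker a y η (s+t)) := by
      rw [ENNReal.ofReal_tsum_of_nonneg hKW0 hsumE, hofsum]
    have lhs0 : 0 ≤ ∑' km : ℕ × ℕ, K2 * W km := tsum_nonneg hKW0
    rw [← ENNReal.toReal_ofReal lhs0, h3, ENNReal.toReal_ofReal hpker0]
  calc pker a y η (s + t) = ∑' km : ℕ × ℕ, K2 * W km := hsum_val.symm
    _ = ∑' km : ℕ × ℕ, ∫ ζ in Set.Ioi (0:ℝ), F km ζ := tsum_congr fun km => (hFval km).symm
    _ = ∫ ζ in Set.Ioi (0:ℝ), ∑' km : ℕ × ℕ, F km ζ := (MeasureTheory.integral_tsum hFmeas hne).symm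
    _ = ∫ ζ in Set.Ioi (0:ℝ), pker a y ζ t * pker a ζ η s * ζ ^ a :=
        setIntegral_congr_fun measurableSet_Ioi fun ζ hζ => (step1 ζ hζ).symm
end
end

section
/- Let U ∈ 𝔖_F(𝕊_1^+) with F satisfying |F(X,t)| ≤ C_ℓ |(X,t)|^{ℓ−2} on 𝕊_1^+ for some ℓ ≥ 2 and C_ℓ > 0, fix σ ∈ (0,1), let κ = Φ_{ℓ,σ}(U,0⁺), and let κ′ be such that κ < κ′ < ℓ − 1 + σ. Then there exists r_U > 0 (depending on U, κ′, σ) such that: (1) H(U, ρr) ≥ ρ^{2κ′} H(U,r) for all 0 < ρ ≤ 1 and 0 < r < r_U; and (2) H(U, Rr) ≤ R^{2κ′} H(U,r) for all R ≥ 1 and 0 < r < r_U/R. -/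
/- Formalization of results from "The structure of the singular set in the thin obstacle
problem for degenerate parabolic equations" by Banerjee, Danielli, Garofalo, Petrosyan.

Points of ℝ^{n+1} are written X = (x,y) with x : Fin n → ℝ and y : ℝ; functions of
space-time are `U : (Fin n → ℝ) → ℝ → ℝ → ℝ`, with `U x y t`. -/

noncomputable section

open MeasureTheory Filter Topology

namespace HD

/-- The thick half-space as a product set. -/
def Qset (n : ℕ) : Set ((Fin n → ℝ) × ℝ) := Set.univ ×ˢ Set.Ioi (0:ℝ)

lemma measurableSet_Qset {n : ℕ} : MeasurableSet (Qset n) :=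
  MeasurableSet.univ.prod measurableSet_Ioi

/-- The normalizing constant of the fundamental solution. -/
def c0 (n : ℕ) (a : ℝ) : ℝ :=
  (4 * Real.pi) ^ (-(n : ℝ) / 2) / ((2:ℝ) ^ a * Real.Gamma ((a + 1) / 2))

/-- The Gaussian rpow moment. -/
def c1 (a : ℝ) : ℝ := ∫ u in Set.Ioi (0:ℝ), u ^ a * Real.exp (-u ^ 2)

lemma c0_pos {n : ℕ} {a : ℝ} (ha₁ : -1 < a) : 0 < c0 n a := by
  apply div_pos (Real.rpow_pos_of_pos (by positivity) _)
  exact mul_pos (Real.rpow_pos_of_pos (by norm_num) _)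
    (Real.Gamma_pos_of_pos (by linarith))

lemma Gbar_eq {n : ℕ} {a : ℝ} (x : Fin n → ℝ) (y t : ℝ) :
    Gbar n a x y t = c0 n a * |t| ^ (-((n : ℝ) + a + 1) / 2) *
      Real.exp (-(nsq x y) / (4 * |t|)) := rfl

lemma Gbar_nonneg {n : ℕ} {a : ℝ} (ha₁ : -1 < a) (x : Fin n → ℝ) (y t : ℝ) :
    0 ≤ Gbar n a x y t := by
  rw [Gbar_eq]
  have := c0_pos (n := n) ha₁
  positivity

lemma wgt_nonneg {n : ℕ} {a : ℝ} (ha₁ : -1 < a) {p : Pt n} (hp : 0 ≤ p.2.1) :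
    0 ≤ wgt n a p :=
  mul_nonneg (Gbar_nonneg ha₁ _ _ _) (Real.rpow_nonneg hp _)

lemma nsq_nonneg {n : ℕ} (x : Fin n → ℝ) (y : ℝ) : 0 ≤ nsq x y := by
  unfold nsq; positivity

end HD
namespace HD

lemma integrableOn_prodGauss {n : ℕ} {a b : ℝ} (ha₁ : -1 < a) (hb : 0 < b) :
    IntegrableOn (fun q : (Fin n → ℝ) × ℝ =>
      Real.exp (-b * ∑ i, (q.1 i) ^ 2) * (q.2 ^ a * Real.exp (-b * q.2 ^ 2)))
      (Qset n) := by
  have hf : Integrable (fun x : Fin n → ℝ => Real.exp (-b * ∑ i, (x i) ^ 2)) := by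
    have h : (fun x : Fin n → ℝ => Real.exp (-b * ∑ i, (x i) ^ 2))
        = fun x => ∏ i, Real.exp (-b * (x i) ^ 2) := by
      funext x
      rw [← Real.exp_sum, Finset.mul_sum]
    rw [h]
    exact MeasureTheory.Integrable.fintype_prod (fun _ => integrable_exp_neg_mul_sq hb)
  have hg : IntegrableOn (fun y : ℝ => y ^ a * Real.exp (-b * y ^ 2)) (Set.Ioi 0) :=
    integrableOn_rpow_mul_exp_neg_mul_sq hb ha₁
  rw [Qset, IntegrableOn, Measure.volume_eq_prod, ← Measure.prod_restrict, Measure.restrict_univ]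
  exact hf.mul_prod hg

lemma weight_integral {n : ℕ} {a : ℝ} (ha₁ : -1 < a) {t : ℝ} (ht : t < 0) :
    ∫ q in Qset n, Gbar n a q.1 q.2 t * q.2 ^ a
      = c0 n a * ((Real.sqrt (4 * Real.pi)) ^ n * ((2:ℝ) ^ a * (2 * c1 a))) := by
  have hτ : 0 < -t := neg_pos.2 ht
  have habs : |t| = -t := abs_of_neg ht
  set τ := -t with hτdef
  set b := (4*τ)⁻¹ with hbdef
  have hb : 0 < b := by positivity
  -- pointwise rewrite on Qset
  have hpt : Set.EqOn (fun q : (Fin n → ℝ) × ℝ => Gbar n a q.1 q.2 t * q.2 ^ a)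
      (fun q => (c0 n a * τ ^ (-((n : ℝ) + a + 1) / 2)) *
        (Real.exp (-b * ∑ i, (q.1 i) ^ 2) * (q.2 ^ a * Real.exp (-b * q.2 ^ 2))))
      (Qset n) := by
    intro q _
    simp only [Gbar_eq, habs]
    have hexp : -(nsq q.1 q.2) / (4 * τ) = (-b * ∑ i, (q.1 i) ^ 2) + (-b * q.2 ^ 2) := by
      rw [hbdef]; unfold nsq; field_simp; ring
    rw [hexp, Real.exp_add]
    ring
  rw [MeasureTheory.setIntegral_congr_fun measurableSet_Qset hpt]
  rw [MeasureTheory.integral_const_mul]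
  rw [Qset, Measure.volume_eq_prod,
    MeasureTheory.setIntegral_prod_mul (fun x : Fin n → ℝ => Real.exp (-b * ∑ i, (x i) ^ 2))
      (fun y : ℝ => y ^ a * Real.exp (-b * y ^ 2)),
    MeasureTheory.setIntegral_univ]
  -- x-integral
  have hx : ∫ x : Fin n → ℝ, Real.exp (-b * ∑ i, (x i) ^ 2)
      = (Real.sqrt (4 * Real.pi) * Real.sqrt τ) ^ n := by
    have h : (fun x : Fin n → ℝ => Real.exp (-b * ∑ i, (x i) ^ 2))
        = fun x => ∏ i, Real.exp (-b * (x i) ^ 2) := by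
      funext x
      rw [← Real.exp_sum, Finset.mul_sum]
    rw [h, MeasureTheory.volume_pi, MeasureTheory.integral_fintype_prod_eq_pow (ι := Fin n)
      (fun v : ℝ => Real.exp (-b * v ^ 2)), integral_gaussian, Fintype.card_fin]
    congr 1
    rw [show Real.pi / (4 * τ)⁻¹ = (4 * Real.pi) * τ by field_simp,
      Real.sqrt_mul (by positivity)]
  -- y-integral
  have hy : ∫ y in Set.Ioi (0:ℝ), y ^ a * Real.exp (-b * y ^ 2)
      = (Real.sqrt (4 * τ)) ^ a * (Real.sqrt (4 * τ) * c1 a) := by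
    set c := Real.sqrt b with hcdef
    have hc : 0 < c := Real.sqrt_pos.2 hb
    have hcsq : c ^ 2 = b := Real.sq_sqrt hb.le
    have hpt2 : Set.EqOn (fun y : ℝ => y ^ a * Real.exp (-b * y ^ 2))
        (fun y => (c ^ a)⁻¹ * ((c * y) ^ a * Real.exp (-(c * y) ^ 2))) (Set.Ioi 0) := by
      intro y hy
      have hy0 : (0:ℝ) < y := hy
      simp only
      rw [Real.mul_rpow hc.le hy0.le, mul_pow, hcsq]
      rw [show (c ^ a)⁻¹ * (c ^ a * y ^ a * Real.exp (-(b * y ^ 2)))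
          = ((c ^ a)⁻¹ * c ^ a) * (y ^ a * Real.exp (-(b * y ^ 2))) by ring,
        inv_mul_cancel₀ (Real.rpow_pos_of_pos hc a).ne', one_mul, neg_mul]
    rw [MeasureTheory.setIntegral_congr_fun measurableSet_Ioi hpt2,
      MeasureTheory.integral_const_mul,
      integral_comp_mul_left_Ioi (fun u => u ^ a * Real.exp (-u ^ 2)) 0 hc,
      mul_zero]
    have hcinv : c⁻¹ = Real.sqrt (4 * τ) := by
      rw [hcdef, hbdef, Real.sqrt_inv, inv_inv]
    have hcpowinv : (c ^ a)⁻¹ = (Real.sqrt (4 * τ)) ^ a := by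
      rw [← hcinv, ← Real.inv_rpow hc.le]
    rw [smul_eq_mul, hcpowinv, hcinv, c1]
  rw [hx, hy]
  -- collect powers of τ
  have h4τ : Real.sqrt (4 * τ) = 2 * Real.sqrt τ := by
    rw [show (4:ℝ) * τ = 2 ^ 2 * τ by ring, Real.sqrt_mul (by positivity),
      Real.sqrt_sq (by norm_num : (0:ℝ) ≤ 2)]
  rw [h4τ, Real.mul_rpow (by norm_num) (Real.sqrt_nonneg τ), mul_pow]
  have key : τ ^ (-((n : ℝ) + a + 1) / 2) *
      ((Real.sqrt τ) ^ n * ((Real.sqrt τ) ^ a * Real.sqrt τ)) = 1 := by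
    rw [Real.sqrt_eq_rpow, ← Real.rpow_natCast (τ ^ (1/(2:ℝ))) n,
      ← Real.rpow_mul hτ.le, ← Real.rpow_mul hτ.le,
      ← Real.rpow_add hτ, ← Real.rpow_add hτ, ← Real.rpow_add hτ]
    rw [show -((n : ℝ) + a + 1) / 2 + (1 / 2 * (n:ℝ) + (1 / 2 * a + 1 / 2)) = 0 by ring,
      Real.rpow_zero]
  calc c0 n a * τ ^ (-((n : ℝ) + a + 1) / 2) *
        (Real.sqrt (4 * Real.pi) ^ n * Real.sqrt τ ^ n *
          ((2:ℝ) ^ a * Real.sqrt τ ^ a * (2 * Real.sqrt τ * c1 a)))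
      = c0 n a * ((Real.sqrt (4 * Real.pi)) ^ n * ((2:ℝ) ^ a * (2 * c1 a))) *
        (τ ^ (-((n : ℝ) + a + 1) / 2) *
          ((Real.sqrt τ) ^ n * ((Real.sqrt τ) ^ a * Real.sqrt τ))) := by ring
    _ = _ := by rw [key, mul_one]

/-- The constant value of the weight integral. -/
def Cw (n : ℕ) (a : ℝ) : ℝ :=
  c0 n a * ((Real.sqrt (4 * Real.pi)) ^ n * ((2:ℝ) ^ a * (2 * c1 a)))

end HD
namespace HD

/-- Pointwise product form of the weight. -/
lemma weight_eqOn (n : ℕ) (a : ℝ) {t : ℝ} (ht : t < 0) : Set.EqOn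
    (fun q : (Fin n → ℝ) × ℝ => Gbar n a q.1 q.2 t * q.2 ^ a)
    (fun q => (c0 n a * (-t) ^ (-((n : ℝ) + a + 1) / 2)) *
      (Real.exp (-(4 * -t)⁻¹ * ∑ i, (q.1 i) ^ 2) *
        (q.2 ^ a * Real.exp (-(4 * -t)⁻¹ * q.2 ^ 2)))) (Qset n) := by
  intro q _
  have hτ : 0 < -t := neg_pos.2 ht
  simp only [Gbar_eq, abs_of_neg ht]
  have hexp : -(nsq q.1 q.2) / (4 * -t)
      = (-(4 * -t)⁻¹ * ∑ i, (q.1 i) ^ 2) + (-(4 * -t)⁻¹ * q.2 ^ 2) := by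
    unfold nsq; field_simp
  rw [hexp, Real.exp_add]; ring

lemma weight_integrableOn {n : ℕ} {a : ℝ} (ha₁ : -1 < a) {t : ℝ} (ht : t < 0) :
    IntegrableOn (fun q : (Fin n → ℝ) × ℝ => Gbar n a q.1 q.2 t * q.2 ^ a) (Qset n) := by
  have hτ : 0 < -t := neg_pos.2 ht
  have h := (integrableOn_prodGauss (n := n) ha₁
    (show 0 < (4 * -t)⁻¹ by positivity)).const_mul
      (c0 n a * (-t) ^ (-((n : ℝ) + a + 1) / 2))
  exact MeasureTheory.IntegrableOn.congr_fun h
    (fun q hq => ((weight_eqOn n a ht) hq).symm) measurableSet_Qset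

/-- Uniform bound on U on the strip t ∈ [-1/2, 0]. -/
lemma U_bound {n : ℕ} {a : ℝ} {F U : Fn n} (hU : SignoriniMem n a F U) :
    ∃ M : ℝ, 0 ≤ M ∧ ∀ x y t, 0 ≤ y → -2⁻¹ ≤ t → t ≤ 0 → |U x y t| ≤ M := by
  obtain ⟨R, hR, hsupp⟩ := hU.bddSupp
  set K : Set (Pt n) :=
    (Metric.closedBall (0 : Fin n → ℝ) R) ×ˢ (Set.Icc 0 R ×ˢ Set.Icc (-2⁻¹ : ℝ) 0) with hKdef
  have hK : IsCompact K :=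
    (isCompact_closedBall _ _).prod (isCompact_Icc.prod isCompact_Icc)
  have hKsub : K ⊆ {p : Pt n | 0 ≤ p.2.1 ∧ p.2.2 ∈ Set.Ioc (-1 : ℝ) 0} := by
    rintro ⟨x, y, t⟩ ⟨_, hy, ht⟩
    exact ⟨hy.1, ⟨by have := ht.1; norm_num at this ⊢; linarith, ht.2⟩⟩
  obtain ⟨M₀, hM₀⟩ := hK.exists_bound_of_continuousOn (hU.cont.mono hKsub)
  refine ⟨max M₀ 0, le_max_right _ _, ?_⟩
  intro x y t hy h1 h2
  by_cases hns : nsq x y ≤ R ^ 2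
  · have hsum : ∀ i, (x i) ^ 2 ≤ R ^ 2 := fun i =>
      le_trans (le_trans (Finset.single_le_sum (f := fun j => (x j) ^ 2)
        (fun j _ => sq_nonneg _) (Finset.mem_univ i))
        (le_add_of_nonneg_right (sq_nonneg y))) hns
    have hysq : y ^ 2 ≤ R ^ 2 := le_trans (le_add_of_nonneg_left (by positivity)) hns
    have hxball : x ∈ Metric.closedBall (0 : Fin n → ℝ) R := by
      rw [Metric.mem_closedBall, dist_zero_right]
      rw [pi_norm_le_iff_of_nonneg hR.le]
      intro i
      have : |x i| = Real.sqrt ((x i) ^ 2) := (Real.sqrt_sq_eq_abs _).symm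
      rw [Real.norm_eq_abs, this, show R = Real.sqrt (R ^ 2) from (Real.sqrt_sq hR.le).symm]
      exact Real.sqrt_le_sqrt (hsum i)
    have hyR : y ≤ R := by
      rw [show y = Real.sqrt (y ^ 2) from (Real.sqrt_sq hy).symm,
        show R = Real.sqrt (R ^ 2) from (Real.sqrt_sq hR.le).symm]
      exact Real.sqrt_le_sqrt hysq
    have := hM₀ (x, y, t) ⟨hxball, ⟨⟨hy, hyR⟩, ⟨h1, h2⟩⟩⟩
    rw [Real.norm_eq_abs] at this
    exact le_trans this (le_max_left _ _)
  · rw [hsupp x y t (le_of_not_ge hns)]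
    simp [le_max_right]

/-- The spatial slice of the height integrand. -/
def Fs (n : ℕ) (a : ℝ) (U : Fn n) (t : ℝ) (q : (Fin n → ℝ) × ℝ) : ℝ :=
  (U q.1 q.2 t) ^ 2 * (Gbar n a q.1 q.2 t * q.2 ^ a)

/-- The time-slice function g(t). -/
def gfun (n : ℕ) (a : ℝ) (U : Fn n) (t : ℝ) : ℝ := ∫ q in Qset n, Fs n a U t q

lemma Fs_nonneg {n : ℕ} {a : ℝ} {U : Fn n} (ha₁ : -1 < a) (t : ℝ)
    {q : (Fin n → ℝ) × ℝ} (hq : q ∈ Qset n) : 0 ≤ Fs n a U t q := by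
  have hy : (0:ℝ) < q.2 := hq.2
  exact mul_nonneg (sq_nonneg _)
    (mul_nonneg (Gbar_nonneg ha₁ _ _ _) (Real.rpow_nonneg hy.le _))

lemma gfun_nonneg {n : ℕ} {a : ℝ} {U : Fn n} (ha₁ : -1 < a) (t : ℝ) :
    0 ≤ gfun n a U t :=
  MeasureTheory.setIntegral_nonneg measurableSet_Qset (fun _ hq => Fs_nonneg ha₁ t hq)

/-- Joint continuity of the integrand. -/
lemma Fs_contAt {n : ℕ} {a : ℝ} {F U : Fn n} (hU : SignoriniMem n a F U)
    {t : ℝ} {q : (Fin n → ℝ) × ℝ} (ht : t ∈ Set.Ioo (-1:ℝ) 0) (hq : 0 < q.2) :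
    ContinuousAt (fun z : ℝ × ((Fin n → ℝ) × ℝ) => Fs n a U z.1 z.2) (t, q) := by
  have hUc : ContinuousAt (fun z : ℝ × ((Fin n → ℝ) × ℝ) => U z.2.1 z.2.2 z.1) (t, q) := by
    have h1 : ContinuousAt (fun p : Pt n => U p.1 p.2.1 p.2.2) (q.1, q.2, t) :=
      (hU.smooth q.1 q.2 t hq ⟨ht.1, ht.2.le⟩).continuousAt
    have hφ : Continuous (fun z : ℝ × ((Fin n → ℝ) × ℝ) => ((z.2.1, z.2.2, z.1) : Pt n)) := by
      fun_prop
    exact ContinuousAt.comp (x := (t, q)) (f := fun z : ℝ × ((Fin n → ℝ) × ℝ) => ((z.2.1, z.2.2, z.1) : Pt n))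
      h1 hφ.continuousAt
  have habs : ContinuousAt (fun z : ℝ × ((Fin n → ℝ) × ℝ) => |z.1|) (t, q) := by fun_prop
  have habsne : |t| ≠ 0 := by rw [abs_of_neg ht.2]; linarith [ht.2]
  have hrp : ContinuousAt (fun z : ℝ × ((Fin n → ℝ) × ℝ) => |z.1| ^ (-((n : ℝ) + a + 1) / 2))
      (t, q) := habs.rpow_const (Or.inl habsne)
  have hnsq : ContinuousAt (fun z : ℝ × ((Fin n → ℝ) × ℝ) => nsq z.2.1 z.2.2) (t, q) := by
    unfold nsq
    fun_prop
  have hexp : ContinuousAt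
      (fun z : ℝ × ((Fin n → ℝ) × ℝ) => Real.exp (-(nsq z.2.1 z.2.2) / (4 * |z.1|))) (t, q) := by
    apply ContinuousAt.rexp
    refine hnsq.neg.div (continuousAt_const.mul habs) ?_
    show (4:ℝ) * |(t, q).1| ≠ 0
    exact mul_ne_zero (by norm_num) habsne
  have hya : ContinuousAt (fun z : ℝ × ((Fin n → ℝ) × ℝ) => z.2.2 ^ a) (t, q) := by
    have : ContinuousAt (fun z : ℝ × ((Fin n → ℝ) × ℝ) => z.2.2) (t, q) := by fun_prop
    exact this.rpow_const (Or.inl hq.ne')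
  unfold Fs
  simp only [Gbar_eq]
  exact (hUc.pow 2).mul (((continuousAt_const.mul hrp).mul hexp).mul hya)

end HD
namespace HD

lemma weight_le {n : ℕ} {a : ℝ} (ha₁ : -1 < a) {m S s : ℝ} (hm : 0 < m)
    (h1 : m ≤ -s) (h2 : -s ≤ S) {q : (Fin n → ℝ) × ℝ} (hq : q ∈ Qset n) :
    Gbar n a q.1 q.2 s * q.2 ^ a ≤ (c0 n a * m ^ (-((n : ℝ) + a + 1) / 2)) *
      (Real.exp (-(4 * S)⁻¹ * ∑ i, (q.1 i) ^ 2) *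
        (q.2 ^ a * Real.exp (-(4 * S)⁻¹ * q.2 ^ 2))) := by
  have hs : s < 0 := by linarith
  have hS : 0 < S := lt_of_lt_of_le (lt_of_lt_of_le hm h1) h2
  have hy : (0:ℝ) < q.2 := hq.2
  have heq := weight_eqOn n a hs hq
  simp only at heq
  rw [heq]
  have hexpo : -((n : ℝ) + a + 1) / 2 ≤ 0 := by
    have : (0:ℝ) ≤ (n : ℝ) := Nat.cast_nonneg n
    linarith
  have e_le : (-s) ^ (-((n : ℝ) + a + 1) / 2) ≤ m ^ (-((n : ℝ) + a + 1) / 2) :=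
    Real.rpow_le_rpow_of_nonpos hm h1 hexpo
  have hbb : (4 * S)⁻¹ ≤ (4 * -s)⁻¹ := by
    exact inv_anti₀ (by linarith) (by linarith)
  have hSig : 0 ≤ ∑ i, (q.1 i) ^ 2 := by positivity
  have exp1 : Real.exp (-(4 * -s)⁻¹ * ∑ i, (q.1 i) ^ 2)
      ≤ Real.exp (-(4 * S)⁻¹ * ∑ i, (q.1 i) ^ 2) := by
    apply Real.exp_le_exp.2
    nlinarith
  have exp2 : Real.exp (-(4 * -s)⁻¹ * q.2 ^ 2) ≤ Real.exp (-(4 * S)⁻¹ * q.2 ^ 2) := by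
    apply Real.exp_le_exp.2
    nlinarith [sq_nonneg q.2]
  have hc0 : 0 ≤ c0 n a := (c0_pos ha₁).le
  have hya : (0:ℝ) ≤ q.2 ^ a := Real.rpow_nonneg hy.le a
  apply mul_le_mul
  · exact mul_le_mul_of_nonneg_left e_le hc0
  · apply mul_le_mul exp1 (mul_le_mul_of_nonneg_left exp2 hya) (by positivity) (by positivity)
  · positivity
  · positivity

lemma Fs_le {n : ℕ} {a : ℝ} {U : Fn n} (ha₁ : -1 < a) {M : ℝ}
    (hM : ∀ x y t, 0 ≤ y → -2⁻¹ ≤ t → t ≤ 0 → |U x y t| ≤ M)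
    {m S s : ℝ} (hm : 0 < m) (h1 : m ≤ -s) (h2 : -s ≤ S) (hs2 : -2⁻¹ ≤ s)
    {q : (Fin n → ℝ) × ℝ} (hq : q ∈ Qset n) :
    Fs n a U s q ≤ (M ^ 2 * (c0 n a * m ^ (-((n : ℝ) + a + 1) / 2))) *
      (Real.exp (-(4 * S)⁻¹ * ∑ i, (q.1 i) ^ 2) *
        (q.2 ^ a * Real.exp (-(4 * S)⁻¹ * q.2 ^ 2))) := by
  have hy : (0:ℝ) < q.2 := hq.2
  have hs : s < 0 := by linarith
  have hU2 : (U q.1 q.2 s) ^ 2 ≤ M ^ 2 := by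
    have := hM q.1 q.2 s hy.le hs2 hs.le
    calc (U q.1 q.2 s) ^ 2 = |U q.1 q.2 s| ^ 2 := (sq_abs _).symm
      _ ≤ M ^ 2 := by nlinarith [abs_nonneg (U q.1 q.2 s)]
  have hw : 0 ≤ Gbar n a q.1 q.2 s * q.2 ^ a :=
    mul_nonneg (Gbar_nonneg ha₁ _ _ _) (Real.rpow_nonneg hy.le _)
  calc Fs n a U s q ≤ M ^ 2 * (Gbar n a q.1 q.2 s * q.2 ^ a) :=
        mul_le_mul_of_nonneg_right hU2 hw
    _ ≤ M ^ 2 * ((c0 n a * m ^ (-((n : ℝ) + a + 1) / 2)) *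
        (Real.exp (-(4 * S)⁻¹ * ∑ i, (q.1 i) ^ 2) *
          (q.2 ^ a * Real.exp (-(4 * S)⁻¹ * q.2 ^ 2)))) := by
        apply mul_le_mul_of_nonneg_left (weight_le ha₁ hm h1 h2 hq) (sq_nonneg M)
    _ = _ := by ring

lemma Fs_sliceCont {n : ℕ} {a : ℝ} {F U : Fn n} (hU : SignoriniMem n a F U)
    {s : ℝ} (hs : s ∈ Set.Ioo (-1:ℝ) 0) :
    ContinuousOn (Fs n a U s) (Qset n) := by
  intro q hq
  have hjoint := Fs_contAt hU hs (hq.2 : (0:ℝ) < q.2)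
  have hin : Continuous (fun q' : (Fin n → ℝ) × ℝ => ((s, q') : ℝ × ((Fin n → ℝ) × ℝ))) :=
    continuous_const.prodMk continuous_id
  exact (ContinuousAt.comp (f := fun q' : (Fin n → ℝ) × ℝ =>
    ((s, q') : ℝ × ((Fin n → ℝ) × ℝ))) hjoint hin.continuousAt).continuousWithinAt

lemma Fs_integrableOn {n : ℕ} {a : ℝ} {F U : Fn n} (hU : SignoriniMem n a F U)
    (ha₁ : -1 < a) {M : ℝ}
    (hM : ∀ x y t, 0 ≤ y → -2⁻¹ ≤ t → t ≤ 0 → |U x y t| ≤ M)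
    {t : ℝ} (ht : t ∈ Set.Ioo (-2⁻¹ : ℝ) 0) :
    IntegrableOn (Fs n a U t) (Qset n) := by
  have hτ : 0 < -t := neg_pos.2 ht.2
  refine MeasureTheory.Integrable.mono'
    ((integrableOn_prodGauss (n := n) ha₁ (show 0 < (4 * -t)⁻¹ by positivity)).const_mul
      (M ^ 2 * (c0 n a * (-t) ^ (-((n : ℝ) + a + 1) / 2)))) ?_ ?_
  · exact (Fs_sliceCont hU ⟨by linarith [ht.1], ht.2⟩).aestronglyMeasurable measurableSet_Qset
  · rw [MeasureTheory.ae_restrict_iff' measurableSet_Qset]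
    apply MeasureTheory.ae_of_all
    intro q hq
    rw [Real.norm_eq_abs, abs_of_nonneg (Fs_nonneg ha₁ t hq)]
    exact Fs_le ha₁ hM hτ le_rfl le_rfl ht.1.le hq

lemma gfun_le {n : ℕ} {a : ℝ} {F U : Fn n} (hU : SignoriniMem n a F U)
    (ha₁ : -1 < a) {M : ℝ}
    (hM : ∀ x y t, 0 ≤ y → -2⁻¹ ≤ t → t ≤ 0 → |U x y t| ≤ M)
    {t : ℝ} (ht : t ∈ Set.Ioo (-2⁻¹ : ℝ) 0) :
    gfun n a U t ≤ M ^ 2 * Cw n a := by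
  have h1 : IntegrableOn (Fs n a U t) (Qset n) := Fs_integrableOn hU ha₁ hM ht
  have h2 : IntegrableOn (fun q : (Fin n → ℝ) × ℝ =>
      M ^ 2 * (Gbar n a q.1 q.2 t * q.2 ^ a)) (Qset n) :=
    (weight_integrableOn ha₁ ht.2).const_mul _
  have hmono := MeasureTheory.setIntegral_mono_on h1 h2 measurableSet_Qset (fun q hq => by
    have hy : (0:ℝ) < q.2 := hq.2
    have hU2 : (U q.1 q.2 t) ^ 2 ≤ M ^ 2 := by
      have := hM q.1 q.2 t hy.le ht.1.le ht.2.le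
      calc (U q.1 q.2 t) ^ 2 = |U q.1 q.2 t| ^ 2 := (sq_abs _).symm
        _ ≤ M ^ 2 := by nlinarith [abs_nonneg (U q.1 q.2 t)]
    exact mul_le_mul_of_nonneg_right hU2
      (mul_nonneg (Gbar_nonneg ha₁ _ _ _) (Real.rpow_nonneg hy.le _)))
  calc gfun n a U t ≤ ∫ q in Qset n, M ^ 2 * (Gbar n a q.1 q.2 t * q.2 ^ a) := hmono
    _ = M ^ 2 * ∫ q in Qset n, Gbar n a q.1 q.2 t * q.2 ^ a :=
        MeasureTheory.integral_const_mul _ _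
    _ = M ^ 2 * Cw n a := by rw [weight_integral ha₁ ht.2]; rfl

lemma gfun_contAt {n : ℕ} {a : ℝ} {F U : Fn n} (hU : SignoriniMem n a F U)
    (ha₁ : -1 < a) {M : ℝ}
    (hM : ∀ x y t, 0 ≤ y → -2⁻¹ ≤ t → t ≤ 0 → |U x y t| ≤ M)
    {t₀ : ℝ} (ht : t₀ ∈ Set.Ioo (-2⁻¹ : ℝ) 0) : ContinuousAt (gfun n a U) t₀ := by
  have ht1 : -2⁻¹ < t₀ := ht.1
  have ht2 : t₀ < 0 := ht.2
  set t₁ := (t₀ + -2⁻¹) / 2 with ht₁def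
  set t₂ := t₀ / 2 with ht₂def
  have h11 : t₁ < t₀ := by rw [ht₁def]; linarith
  have h12 : -2⁻¹ < t₁ := by rw [ht₁def]; linarith
  have h21 : t₀ < t₂ := by rw [ht₂def]; linarith
  have h22 : t₂ < 0 := by rw [ht₂def]; linarith
  set m := -t₂ with hmdef
  set S := -t₁ with hSdef
  have hm : 0 < m := by rw [hmdef]; linarith
  have hS : 0 < S := by rw [hSdef]; linarith
  apply MeasureTheory.continuousAt_of_dominated (bound := fun q =>
    (M ^ 2 * (c0 n a * m ^ (-((n : ℝ) + a + 1) / 2))) *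
      (Real.exp (-(4 * S)⁻¹ * ∑ i, (q.1 i) ^ 2) *
        (q.2 ^ a * Real.exp (-(4 * S)⁻¹ * q.2 ^ 2))))
  · filter_upwards [Ioo_mem_nhds h11 h21] with s hs
    exact (Fs_sliceCont hU ⟨by linarith [hs.1], by linarith [hs.2]⟩).aestronglyMeasurable
      measurableSet_Qset
  · filter_upwards [Ioo_mem_nhds h11 h21] with s hs
    rw [MeasureTheory.ae_restrict_iff' measurableSet_Qset]
    apply MeasureTheory.ae_of_all
    intro q hq
    rw [Real.norm_eq_abs, abs_of_nonneg (Fs_nonneg ha₁ s hq)]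
    exact Fs_le ha₁ hM hm (by rw [hmdef]; linarith [hs.2]) (by rw [hSdef]; linarith [hs.1])
      (by linarith [hs.1]) hq
  · exact MeasureTheory.Integrable.const_mul
      (integrableOn_prodGauss (n := n) ha₁ (show 0 < (4 * S)⁻¹ by positivity)) _
  · rw [MeasureTheory.ae_restrict_iff' measurableSet_Qset]
    apply MeasureTheory.ae_of_all
    intro q hq
    have hjoint := Fs_contAt hU ⟨by linarith, ht2⟩ (hq.2 : (0:ℝ) < q.2)
    have hin : Continuous (fun s : ℝ => ((s, q) : ℝ × ((Fin n → ℝ) × ℝ))) :=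
      continuous_id.prodMk continuous_const
    exact ContinuousAt.comp (f := fun s : ℝ => ((s, q) : ℝ × ((Fin n → ℝ) × ℝ)))
      hjoint hin.continuousAt

end HD
namespace HD

lemma Splus_eq (n : ℕ) (r : ℝ) :
    Splus n r = Set.univ ×ˢ (Set.Ioi (0:ℝ) ×ˢ Set.Ioc (-(r^2)) 0) := by
  ext p
  simp only [Splus, Set.mem_setOf_eq, Set.mem_prod, Set.mem_univ, true_and, Set.mem_Ioi]

lemma measurableSet_Splus {n : ℕ} {r : ℝ} : MeasurableSet (Splus n r) := by
  rw [Splus_eq]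
  exact MeasurableSet.univ.prod (measurableSet_Ioi.prod measurableSet_Ioc)

lemma Hfn_nonneg {n : ℕ} {a : ℝ} (ha₁ : -1 < a) (U : Fn n) (r : ℝ) :
    0 ≤ Hfn n a U r := by
  unfold Hfn
  apply mul_nonneg (by positivity)
  apply MeasureTheory.setIntegral_nonneg measurableSet_Splus
  intro p hp
  exact mul_nonneg (sq_nonneg _) (wgt_nonneg ha₁ hp.1.le)

/-- The reordering equivalence (x,(y,t)) ↦ (t,(x,y)). -/
def eqv (n : ℕ) : Pt n ≃ᵐ ℝ × ((Fin n → ℝ) × ℝ) :=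
  Homeomorph.toMeasurableEquiv
    { toFun := fun p : Pt n => ((p.2.2, (p.1, p.2.1)) : ℝ × ((Fin n → ℝ) × ℝ))
      invFun := fun z : ℝ × ((Fin n → ℝ) × ℝ) => ((z.2.1, z.2.2, z.1) : Pt n)
      left_inv := fun p => rfl
      right_inv := fun z => rfl
      continuous_toFun := by fun_prop
      continuous_invFun := by fun_prop }

lemma eqv_apply {n : ℕ} (p : Pt n) : eqv n p = (p.2.2, (p.1, p.2.1)) := rfl

lemma eqv_mp (n : ℕ) : MeasurePreserving (eqv n) (volume : Measure (Pt n)) volume := by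
  have m₁ : MeasurePreserving
      (Prod.map (id : (Fin n → ℝ) → (Fin n → ℝ)) (Prod.swap : ℝ × ℝ → ℝ × ℝ))
      ((volume : Measure (Fin n → ℝ)).prod ((volume : Measure ℝ).prod volume))
      ((volume : Measure (Fin n → ℝ)).prod ((volume : Measure ℝ).prod volume)) :=
    (MeasurePreserving.id _).prod Measure.measurePreserving_swap
  have m₂ : MeasurePreserving (Prod.swap : (Fin n → ℝ) × (ℝ × ℝ) → (ℝ × ℝ) × (Fin n → ℝ))
      ((volume : Measure (Fin n → ℝ)).prod ((volume : Measure ℝ).prod volume))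
      (((volume : Measure ℝ).prod volume).prod (volume : Measure (Fin n → ℝ))) :=
    Measure.measurePreserving_swap
  have m₃ := MeasureTheory.measurePreserving_prodAssoc (volume : Measure ℝ)
    (volume : Measure ℝ) (volume : Measure (Fin n → ℝ))
  have m₄ : MeasurePreserving
      (Prod.map (id : ℝ → ℝ) (Prod.swap : ℝ × (Fin n → ℝ) → (Fin n → ℝ) × ℝ))
      ((volume : Measure ℝ).prod ((volume : Measure ℝ).prod (volume : Measure (Fin n → ℝ))))
      ((volume : Measure ℝ).prod ((volume : Measure (Fin n → ℝ)).prod volume)) :=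
    (MeasurePreserving.id _).prod Measure.measurePreserving_swap
  exact (m₄.comp (m₃.comp (m₂.comp m₁)) : _)

lemma Cw_nonneg {n : ℕ} {a : ℝ} (ha₁ : -1 < a) : 0 ≤ Cw n a := by
  have := weight_integral (n := n) ha₁ (show (-1:ℝ) < 0 by norm_num)
  rw [show c0 n a * ((Real.sqrt (4 * Real.pi)) ^ n * ((2:ℝ) ^ a * (2 * c1 a))) = Cw n a
    from rfl] at this
  rw [← this]
  apply MeasureTheory.setIntegral_nonneg measurableSet_Qset
  intro q hq
  exact mul_nonneg (Gbar_nonneg ha₁ _ _ _) (Real.rpow_nonneg (le_of_lt hq.2) _)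

lemma gfun_integrableOn {n : ℕ} {a : ℝ} {F U : Fn n} (hU : SignoriniMem n a F U)
    (ha₁ : -1 < a) {M : ℝ}
    (hM : ∀ x y t, 0 ≤ y → -2⁻¹ ≤ t → t ≤ 0 → |U x y t| ≤ M)
    {r : ℝ} (hr : 0 < r) (hr2 : r < 2⁻¹) :
    IntegrableOn (gfun n a U) (Set.Ioc (-(r^2)) 0) := by
  have hr4 : r ^ 2 < 4⁻¹ := by nlinarith
  rw [IntegrableOn, ← Measure.restrict_congr_set Ioo_ae_eq_Ioc]
  refine MeasureTheory.Integrable.mono' (g := fun _ => M ^ 2 * Cw n a) ?_ ?_ ?_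
  · exact MeasureTheory.integrableOn_const measure_Ioo_lt_top.ne
  · exact (ContinuousOn.aestronglyMeasurable (fun t ht =>
      (gfun_contAt hU ha₁ hM ⟨by simp at ht ⊢; linarith [ht.1], ht.2⟩).continuousWithinAt)
      measurableSet_Ioo)
  · rw [MeasureTheory.ae_restrict_iff' measurableSet_Ioo]
    apply MeasureTheory.ae_of_all
    intro t ht
    rw [Real.norm_eq_abs, abs_of_nonneg (gfun_nonneg ha₁ t)]
    exact gfun_le hU ha₁ hM ⟨by simp at ht ⊢; linarith [ht.1], ht.2⟩

lemma BigF_aesm {n : ℕ} {a : ℝ} {F U : Fn n} (hU : SignoriniMem n a F U)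
    {r : ℝ} (hr : 0 < r) (hr2 : r < 1) :
    AEStronglyMeasurable (fun z : ℝ × ((Fin n → ℝ) × ℝ) => Fs n a U z.1 z.2)
      ((volume.restrict (Set.Ioc (-(r^2)) 0)).prod (volume.restrict (Qset n))) := by
  set O : Set (ℝ × ((Fin n → ℝ) × ℝ)) := Set.Ioo (-1:ℝ) 0 ×ˢ (Set.univ ×ˢ Set.Ioi 0) with hO
  have hOopen : IsOpen O := isOpen_Ioo.prod (isOpen_univ.prod isOpen_Ioi)
  have hcont : ContinuousOn (fun z : ℝ × ((Fin n → ℝ) × ℝ) => Fs n a U z.1 z.2) O := by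
    intro z hz
    exact (Fs_contAt hU hz.1 hz.2.2).continuousWithinAt
  have h0 : AEStronglyMeasurable (fun z : ℝ × ((Fin n → ℝ) × ℝ) => Fs n a U z.1 z.2)
      (((volume : Measure ℝ).prod (volume : Measure ((Fin n → ℝ) × ℝ))).restrict O) :=
    hcont.aestronglyMeasurable hOopen.measurableSet
  rw [Measure.prod_restrict]
  set A := Set.Ioc (-(r ^ 2)) 0 ×ˢ Qset n with hA
  have hr1 : (-1 : ℝ) < -(r^2) := by nlinarith
  have hAO : ((volume : Measure ℝ).prod
      (volume : Measure ((Fin n → ℝ) × ℝ))).restrict A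
      = ((volume : Measure ℝ).prod (volume : Measure ((Fin n → ℝ) × ℝ))).restrict (A ∩ O) := by
    apply Measure.restrict_congr_set
    rw [MeasureTheory.ae_eq_set]
    constructor
    · have hsub : A \ (A ∩ O) ⊆
          (({(0:ℝ)} : Set ℝ) ×ˢ (Set.univ : Set ((Fin n → ℝ) × ℝ))) := by
        rintro z ⟨hzA, hz2⟩
        by_cases hz0 : z.1 = 0
        · exact ⟨hz0, Set.mem_univ _⟩
        · exfalso
          apply hz2
          refine ⟨hzA, ⟨⟨?_, ?_⟩, ⟨Set.mem_univ _, hzA.2.2⟩⟩⟩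
          · exact lt_of_lt_of_le hr1 hzA.1.1.le
          · exact lt_of_le_of_ne hzA.1.2 hz0
      apply measure_mono_null hsub
      rw [Measure.prod_prod]
      simp [Real.volume_singleton]
    · simp [Set.diff_eq_empty.mpr Set.inter_subset_left]
  rw [hAO]
  exact h0.mono_measure (Measure.restrict_mono Set.inter_subset_right le_rfl)

lemma BigF_integrable {n : ℕ} {a : ℝ} {F U : Fn n} (hU : SignoriniMem n a F U)
    (ha₁ : -1 < a) {M : ℝ}
    (hM : ∀ x y t, 0 ≤ y → -2⁻¹ ≤ t → t ≤ 0 → |U x y t| ≤ M)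
    {r : ℝ} (hr : 0 < r) (hr2 : r < 2⁻¹) :
    Integrable (fun z : ℝ × ((Fin n → ℝ) × ℝ) => Fs n a U z.1 z.2)
      ((volume.restrict (Set.Ioc (-(r^2)) 0)).prod (volume.restrict (Qset n))) := by
  rw [MeasureTheory.integrable_prod_iff (BigF_aesm hU hr (by linarith [hr2]; ))]
  constructor
  · have h0 : ∀ᵐ t ∂(volume.restrict (Set.Ioc (-(r^2)) (0:ℝ))), t ≠ 0 := by
      apply MeasureTheory.ae_restrict_of_ae
      rw [MeasureTheory.ae_iff]
      have : {x : ℝ | ¬ x ≠ 0} = {0} := by ext x; simp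
      rw [this]
      exact Real.volume_singleton
    filter_upwards [MeasureTheory.ae_restrict_mem measurableSet_Ioc, h0] with t htmem htne
    exact Fs_integrableOn hU ha₁ hM ⟨by have := htmem.1; simp at this ⊢; nlinarith,
      lt_of_le_of_ne htmem.2 htne⟩
  · have heq : (fun t => ∫ q, ‖Fs n a U t q‖ ∂(volume.restrict (Qset n))) = gfun n a U := by
      funext t
      exact MeasureTheory.setIntegral_congr_fun measurableSet_Qset
        (fun q hq => by rw [Real.norm_eq_abs, abs_of_nonneg (Fs_nonneg ha₁ t hq)])
    rw [heq]
    exact gfun_integrableOn hU ha₁ hM hr hr2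

lemma Hfn_eq {n : ℕ} {a : ℝ} {F U : Fn n} (hU : SignoriniMem n a F U)
    (ha₁ : -1 < a) {M : ℝ}
    (hM : ∀ x y t, 0 ≤ y → -2⁻¹ ≤ t → t ≤ 0 → |U x y t| ≤ M)
    {r : ℝ} (hr : 0 < r) (hr2 : r < 2⁻¹) :
    Hfn n a U r = (1 / r ^ 2) * ∫ t in (-(r^2))..(0:ℝ), gfun n a U t := by
  have hpre : (⇑(eqv n)) ⁻¹' (Set.Ioc (-(r^2)) 0 ×ˢ Qset n) = Splus n r := by
    ext p
    simp only [Set.mem_preimage, eqv_apply, Set.mem_prod, Set.mem_Ioc, Qset, Set.mem_univ,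
      true_and, Set.mem_Ioi, Splus, Set.mem_setOf_eq]
    tauto
  have h1 : ∫ p in Splus n r, (U p.1 p.2.1 p.2.2) ^ 2 * wgt n a p
      = ∫ z in Set.Ioc (-(r^2)) 0 ×ˢ Qset n, Fs n a U z.1 z.2 := by
    rw [← hpre]
    exact (eqv_mp n).setIntegral_preimage_emb (eqv n).measurableEmbedding
      (fun z => Fs n a U z.1 z.2) _
  have hint : IntegrableOn (fun z : ℝ × ((Fin n → ℝ) × ℝ) => Fs n a U z.1 z.2)
      (Set.Ioc (-(r^2)) 0 ×ˢ Qset n)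
      ((volume : Measure ℝ).prod (volume : Measure ((Fin n → ℝ) × ℝ))) := by
    rw [IntegrableOn, ← Measure.prod_restrict]
    exact BigF_integrable hU ha₁ hM hr hr2
  have h2 : ∫ z in Set.Ioc (-(r^2)) 0 ×ˢ Qset n, Fs n a U z.1 z.2
      = ∫ t in Set.Ioc (-(r^2)) 0, gfun n a U t := by
    rw [Measure.volume_eq_prod, MeasureTheory.setIntegral_prod _ hint]
    rfl
  have h3 : ∫ t in Set.Ioc (-(r^2)) 0, gfun n a U t
      = ∫ t in (-(r^2))..(0:ℝ), gfun n a U t :=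
    (intervalIntegral.integral_of_le (neg_nonpos.2 (sq_nonneg r))).symm
  show (1 / r ^ 2) * ∫ p in Splus n r, (U p.1 p.2.1 p.2.2) ^ 2 * wgt n a p = _
  rw [h1, h2, h3]

lemma Hfn_diff {n : ℕ} {a : ℝ} {F U : Fn n} (hU : SignoriniMem n a F U)
    (ha₁ : -1 < a) {M : ℝ}
    (hM : ∀ x y t, 0 ≤ y → -2⁻¹ ≤ t → t ≤ 0 → |U x y t| ≤ M)
    {r : ℝ} (hr : 0 < r) (hr2 : r < 2⁻¹) :
    DifferentiableAt ℝ (Hfn n a U) r := by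
  set KK : ℝ → ℝ := fun s => ∫ u in s..(0:ℝ), gfun n a U u with hKK
  have hIoo : -(r^2) ∈ Set.Ioo (-2⁻¹ : ℝ) 0 := ⟨by nlinarith, by nlinarith⟩
  have hKd : HasDerivAt KK (-(gfun n a U (-(r^2)))) (-(r^2)) := by
    apply intervalIntegral.integral_hasDerivAt_left
    · exact (intervalIntegrable_iff_integrableOn_Ioc_of_le
        (neg_nonpos.2 (sq_nonneg r))).2 (gfun_integrableOn hU ha₁ hM hr hr2)
    · exact ContinuousAt.stronglyMeasurableAtFilter (isOpen_Ioo (a := (-2⁻¹:ℝ)) (b := (0:ℝ)))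
        (fun x hx => gfun_contAt hU ha₁ hM hx) _ hIoo
    · exact gfun_contAt hU ha₁ hM hIoo
  have hsq : HasDerivAt (fun s : ℝ => -(s^2)) (-(2*r)) r := by
    simpa using (hasDerivAt_pow 2 r).fun_neg
  have hcomp : HasDerivAt (fun s : ℝ => KK (-(s^2)))
      (-(gfun n a U (-(r^2))) * (-(2*r))) r := by have h := HasDerivAt.comp r hKd hsq; exact h
  have hfull : DifferentiableAt ℝ (fun s : ℝ => (1 / s ^ 2) * KK (-(s^2))) r := by
    apply DifferentiableAt.mul
    · exact (differentiableAt_const (1:ℝ)).div (differentiableAt_pow 2)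
        (pow_ne_zero 2 hr.ne')
    · exact hcomp.differentiableAt
  have hev : Hfn n a U =ᶠ[𝓝 r] fun s : ℝ => (1 / s ^ 2) * KK (-(s^2)) := by
    filter_upwards [Ioo_mem_nhds hr hr2] with s hs
    exact Hfn_eq hU ha₁ hM hs.1 hs.2
  exact (hev.differentiableAt_iff).2 hfull

end HD
set_option maxHeartbeats 1000000 in
/-- the nondegeneracy Lemma 6.3. -/
theorem height_doubling (n : ℕ) (hn : 1 ≤ n) (a : ℝ) (ha₁ : -1 < a) (ha₂ : a < 1)
    (F U : Fn n) (hU : SignoriniMem n a F U)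
    (l Cl : ℝ) (hl : 2 ≤ l) (hCl : 0 < Cl) (hF : FGrowth n F l Cl)
    (σ : ℝ) (hσ : σ ∈ Set.Ioo (0 : ℝ) 1) (C : ℝ) (hC : 0 < C)
    (hmono : ∀ r₁ ∈ diffSet n a U l σ, ∀ r₂ ∈ diffSet n a U l σ, r₁ ≤ r₂ →
      Phi n a U l σ C r₁ ≤ Phi n a U l σ C r₂)
    (κ : ℝ) (hκ : Tendsto (Phi n a U l σ C) (𝓝[diffSet n a U l σ] 0) (𝓝 κ))
    (κ' : ℝ) (hκ'₁ : κ < κ') (hκ'₂ : κ' < l - 1 + σ) :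
    ∃ rU > (0:ℝ),
      (∀ ρ : ℝ, 0 < ρ → ρ ≤ 1 → ∀ r : ℝ, 0 < r → r < rU →
        ρ ^ (2 * κ') * Hfn n a U r ≤ Hfn n a U (ρ * r)) ∧
      (∀ R : ℝ, 1 ≤ R → ∀ r : ℝ, 0 < r → r < rU / R →
        Hfn n a U (R * r) ≤ R ^ (2 * κ') * Hfn n a U r) := by
  obtain ⟨hσ0, hσ1⟩ := hσ
  obtain ⟨M, hM0, hM⟩ := HD.U_bound hU
  set β : ℝ := 2 * l - 2 + 2 * σ with hβ
  have hβpos : 0 < β := by rw [hβ]; linarith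
  have hβκ' : κ' < β / 2 := by rw [hβ]; linarith
  set c : ℝ := (κ + κ') / 2 with hcdef
  have hc1 : κ < c := by rw [hcdef]; linarith
  have hc2 : c < κ' := by rw [hcdef]; linarith
  -- δ₁ from the limit hypothesis
  have hev1 : ∀ᶠ r in 𝓝[diffSet n a U l σ] 0, Phi n a U l σ C r < c := hκ (Iio_mem_nhds hc1)
  rw [eventually_nhdsWithin_iff, Metric.eventually_nhds_iff] at hev1
  obtain ⟨δ₁, hδ₁pos, hδ₁⟩ := hev1
  -- δ₂ : for small positive r one has c / exp(C r^{1-σ}) < κ'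
  have hrpow : Tendsto (fun r : ℝ => r ^ (1 - σ)) (𝓝[>] (0:ℝ)) (𝓝 0) := by
    have hcont : ContinuousAt (fun x : ℝ => x ^ (1 - σ)) 0 :=
      Real.continuousAt_rpow_const 0 (1 - σ) (Or.inr (by linarith))
    have h0 : (0:ℝ) ^ (1 - σ) = 0 := Real.zero_rpow (by intro h; exact (by linarith : ¬ (1 - σ = 0)) h)
    have h1 := hcont.tendsto
    rw [h0] at h1
    exact h1.mono_left nhdsWithin_le_nhds
  have hexp1 : Tendsto (fun r : ℝ => Real.exp (C * r ^ (1 - σ))) (𝓝[>] (0:ℝ)) (𝓝 1) := by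
    have h2 : Tendsto (fun r : ℝ => C * r ^ (1 - σ)) (𝓝[>] (0:ℝ)) (𝓝 0) := by
      simpa using (tendsto_const_nhds (x := C)).mul hrpow
    have h3 := (Real.continuous_exp.tendsto 0).comp h2
    rw [Real.exp_zero] at h3
    exact h3
  have htend : Tendsto (fun r : ℝ => c / Real.exp (C * r ^ (1 - σ))) (𝓝[>] (0:ℝ)) (𝓝 c) := by
    have h4 := (tendsto_const_nhds (x := c)).div hexp1 one_ne_zero
    rw [div_one] at h4
    exact h4
  have hev2 : ∀ᶠ r in 𝓝[>] (0:ℝ), c / Real.exp (C * r ^ (1 - σ)) < κ' :=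
    htend (Iio_mem_nhds hc2)
  rw [eventually_nhdsWithin_iff, Metric.eventually_nhds_iff] at hev2
  obtain ⟨δ₂, hδ₂pos, hδ₂⟩ := hev2
  set r₀ : ℝ := min δ₁ (min δ₂ (4⁻¹ : ℝ)) with hr₀def
  have hr₀pos : 0 < r₀ := lt_min hδ₁pos (lt_min hδ₂pos (by norm_num))
  have hr₀quarter : r₀ ≤ 4⁻¹ := le_trans (min_le_right _ _) (min_le_right _ _)
  have hr₀δ₁ : r₀ ≤ δ₁ := min_le_left _ _
  have hr₀δ₂ : r₀ ≤ δ₂ := le_trans (min_le_right _ _) (min_le_left _ _)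
  -- the Phi bound at points of the differentiability set
  have hPhiBound : ∀ r, 0 < r → r < r₀ → r ∈ diffSet n a U l σ → Phi n a U l σ C r < c := by
    intro r hr hrr₀ hrd
    apply hδ₁ _ hrd
    rw [Real.dist_eq, sub_zero, abs_of_pos hr]
    exact lt_of_lt_of_le hrr₀ hr₀δ₁
  -- Step 1 : nondegeneracy H(r) ≥ r^β on (0, r₀)
  have hHge : ∀ r, 0 < r → r < r₀ → r ^ β ≤ Hfn n a U r := by
    intro r hr hrr₀
    by_contra hlt
    push_neg at hlt
    have hr2 : r < 2⁻¹ := by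
      have := lt_of_lt_of_le hrr₀ hr₀quarter; linarith
    have hHcont : ContinuousAt (Hfn n a U) r := (HD.Hfn_diff hU ha₁ hM hr hr2).continuousAt
    have hrpcont : ContinuousAt (fun s : ℝ => s ^ β) r :=
      Real.continuousAt_rpow_const r β (Or.inl hr.ne')
    have hev : ∀ᶠ s in 𝓝 r, Hfn n a U s < s ^ β := by
      have hsub : ContinuousAt (fun s => Hfn n a U s - s ^ β) r := hHcont.sub hrpcont
      have hneg : Hfn n a U r - r ^ β < 0 := by linarith
      have := hsub.tendsto.eventually_lt_const hneg
      filter_upwards [this] with s hs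
      linarith
    have heq : logMaxH n a U l σ =ᶠ[𝓝 r] fun s => β * Real.log s := by
      filter_upwards [Ioo_mem_nhds hr hrr₀, hev] with s hs hlt'
      unfold logMaxH
      rw [← hβ, max_eq_right hlt'.le, Real.log_rpow hs.1]
    have hdiffAt : DifferentiableAt ℝ (logMaxH n a U l σ) r := by
      rw [heq.differentiableAt_iff]
      exact (differentiableAt_const β).mul (Real.differentiableAt_log hr.ne')
    have hdval : deriv (logMaxH n a U l σ) r = β / r := by
      rw [heq.deriv_eq, deriv_const_mul _ (Real.differentiableAt_log hr.ne'), Real.deriv_log,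
        div_eq_mul_inv]
    have hrdiff : r ∈ diffSet n a U l σ := by
      refine ⟨⟨hr, ?_⟩, hdiffAt⟩
      have := lt_of_lt_of_le hrr₀ hr₀quarter; linarith
    have hΦlt : Phi n a U l σ C r < c := hPhiBound r hr hrr₀ hrdiff
    have hE1 : 1 ≤ Real.exp (C * r ^ (1 - σ)) := by
      rw [← Real.exp_zero]
      exact Real.exp_le_exp.2 (mul_nonneg hC.le (Real.rpow_nonneg hr.le _))
    have hPhi : Phi n a U l σ C r
        = β / 2 * Real.exp (C * r ^ (1 - σ)) + 2 * (Real.exp (C * r ^ (1 - σ)) - 1) := by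
      unfold Phi
      rw [hdval]
      field_simp
    nlinarith [hΦlt, hPhi, hE1, hβpos, hβκ', hc2]
  -- Step 2 : differentiability of logMaxH and derivative bound on (0, r₀)
  have hkey : ∀ r, 0 < r → r < r₀ →
      DifferentiableAt ℝ (logMaxH n a U l σ) r ∧
        deriv (logMaxH n a U l σ) r < 2 * κ' / r := by
    intro r hr hrr₀
    have hr2 : r < 2⁻¹ := by
      have := lt_of_lt_of_le hrr₀ hr₀quarter; linarith
    have hHpos : 0 < Hfn n a U r :=
      lt_of_lt_of_le (Real.rpow_pos_of_pos hr β) (hHge r hr hrr₀)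
    have heq : logMaxH n a U l σ =ᶠ[𝓝 r] fun s => Real.log (Hfn n a U s) := by
      filter_upwards [Ioo_mem_nhds hr hrr₀] with s hs
      unfold logMaxH
      rw [← hβ, max_eq_left (hHge s hs.1 hs.2)]
    have hdiffAt : DifferentiableAt ℝ (logMaxH n a U l σ) r := by
      rw [heq.differentiableAt_iff]
      exact (HD.Hfn_diff hU ha₁ hM hr hr2).log hHpos.ne'
    have hrdiff : r ∈ diffSet n a U l σ := by
      refine ⟨⟨hr, ?_⟩, hdiffAt⟩
      have := lt_of_lt_of_le hrr₀ hr₀quarter; linarith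
    have hΦlt : Phi n a U l σ C r < c := hPhiBound r hr hrr₀ hrdiff
    set E := Real.exp (C * r ^ (1 - σ)) with hE
    have hEpos : 0 < E := Real.exp_pos _
    have hE1 : 1 ≤ E := by
      rw [hE, ← Real.exp_zero]
      exact Real.exp_le_exp.2 (mul_nonneg hC.le (Real.rpow_nonneg hr.le _))
    have hq : c / E < κ' := by
      apply hδ₂ _ hr
      rw [Real.dist_eq, sub_zero, abs_of_pos hr]
      exact lt_of_lt_of_le hrr₀ hr₀δ₂
    have hqE : c < κ' * E := (div_lt_iff₀ hEpos).1 hq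
    set D := deriv (logMaxH n a U l σ) r with hD
    have h1 : 1/2 * r * E * D + 2 * (E - 1) < c := hΦlt
    have h2 : r * D * E < 2 * κ' * E := by nlinarith
    have h3 : r * D < 2 * κ' := lt_of_mul_lt_mul_right h2 hEpos.le
    refine ⟨hdiffAt, (lt_div_iff₀ hr).2 (by linarith)⟩
  -- Step 3 : strict monotonicity of the reduced frequency
  set ψ : ℝ → ℝ := fun s => logMaxH n a U l σ s - 2 * κ' * Real.log s with hψdef
  have hψanti : StrictAntiOn ψ (Set.Ioo 0 r₀) := by
    apply strictAntiOn_of_deriv_neg (convex_Ioo _ _)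
    · intro s hs
      exact ((hkey s hs.1 hs.2).1.sub
        ((differentiableAt_const _).mul
          (Real.differentiableAt_log hs.1.ne'))).continuousAt.continuousWithinAt
    · intro s hs
      rw [interior_Ioo] at hs
      have hd := hkey s hs.1 hs.2
      have hlog : DifferentiableAt ℝ (fun u : ℝ => 2 * κ' * Real.log u) s :=
        (differentiableAt_const _).mul (Real.differentiableAt_log hs.1.ne')
      rw [hψdef]
      rw [deriv_fun_sub hd.1 hlog, deriv_const_mul _ (Real.differentiableAt_log hs.1.ne'),
        Real.deriv_log]
      have h2 := hd.2
      rw [div_eq_mul_inv] at h2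
      have : (2:ℝ) * κ' / s = 2 * κ' * s⁻¹ := by rw [div_eq_mul_inv]
      linarith [hd.2, this ▸ hd.2]
  -- Step 4 : the doubling comparison
  have hcomp : ∀ s r : ℝ, 0 < s → s ≤ r → r < r₀ →
      Hfn n a U r ≤ (r / s) ^ (2 * κ') * Hfn n a U s := by
    intro s r hs hsr hrr₀
    rcases eq_or_lt_of_le hsr with heqsr | hlt
    · subst heqsr
      rw [div_self hs.ne', Real.one_rpow, one_mul]
    · have hr : 0 < r := lt_trans hs hlt
      have hψlt : ψ r < ψ s := hψanti ⟨hs, lt_trans hlt hrr₀⟩ ⟨hr, hrr₀⟩ hlt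
      have hHr : 0 < Hfn n a U r :=
        lt_of_lt_of_le (Real.rpow_pos_of_pos hr β) (hHge r hr hrr₀)
      have hHs : 0 < Hfn n a U s :=
        lt_of_lt_of_le (Real.rpow_pos_of_pos hs β) (hHge s hs (lt_trans hlt hrr₀))
      have hLr : logMaxH n a U l σ r = Real.log (Hfn n a U r) := by
        unfold logMaxH
        rw [← hβ, max_eq_left (hHge r hr hrr₀)]
      have hLs : logMaxH n a U l σ s = Real.log (Hfn n a U s) := by
        unfold logMaxH
        rw [← hβ, max_eq_left (hHge s hs (lt_trans hlt hrr₀))]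
      rw [hψdef] at hψlt
      simp only at hψlt
      rw [hLr, hLs] at hψlt
      have h2 : Real.log (Hfn n a U r / Hfn n a U s) ≤ Real.log ((r / s) ^ (2 * κ')) := by
        rw [Real.log_div hHr.ne' hHs.ne', Real.log_rpow (div_pos hr hs),
          Real.log_div hr.ne' hs.ne']
        linarith [hψlt]
      have h3 : Hfn n a U r / Hfn n a U s ≤ (r / s) ^ (2 * κ') :=
        (Real.log_le_log_iff (div_pos hHr hHs) (Real.rpow_pos_of_pos (div_pos hr hs) _)).1 h2
      exact (div_le_iff₀ hHs).1 h3
  refine ⟨r₀, hr₀pos, ?_, ?_⟩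
  · intro ρ hρ hρ1 r hr hrr₀
    have hρr : 0 < ρ * r := mul_pos hρ hr
    have hρrle : ρ * r ≤ r := by
      calc ρ * r ≤ 1 * r := mul_le_mul_of_nonneg_right hρ1 hr.le
        _ = r := one_mul r
    have h := hcomp (ρ * r) r hρr hρrle hrr₀
    have hdiv : r / (ρ * r) = ρ⁻¹ := by
      field_simp
    rw [hdiv, Real.inv_rpow hρ.le] at h
    have hP : 0 < ρ ^ (2 * κ') := Real.rpow_pos_of_pos hρ _
    calc ρ ^ (2 * κ') * Hfn n a U r
        ≤ ρ ^ (2 * κ') * ((ρ ^ (2 * κ'))⁻¹ * Hfn n a U (ρ * r)) :=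
          mul_le_mul_of_nonneg_left h hP.le
      _ = Hfn n a U (ρ * r) := by
          rw [← mul_assoc, mul_inv_cancel₀ hP.ne', one_mul]
  · intro R hR r hr hrrU
    have hR0 : 0 < R := lt_of_lt_of_le one_pos hR
    have hRr : R * r < r₀ := by
      have := (lt_div_iff₀ hR0).1 hrrU
      linarith [this, mul_comm r R]
    have hrle : r ≤ R * r := le_mul_of_one_le_left hr.le hR
    have h := hcomp r (R * r) hr hrle hRr
    have hdiv : (R * r) / r = R := mul_div_cancel_right₀ R hr.ne'
    rw [hdiv] at h
    exact h
end
end
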